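/- arXiv:2403.01857 — 6 statements merged into one kernel-verified Lean document; each statement's English description precedes it below -/
import Mathlib

section
/- Suppose the reward r* satisfies r*(x,y) = β log(π_{θ*}(y|x)/μ(y|x)) + β c(x) for all (x,y), for some θ* ∈ ℝ^{d_P} and some function c : 𝒳 → ℝ. Then for every θ̃ ∈ ℝ^{d_P}: 𝒱^{π_{θ*}}_{r*}(ρ) − 𝒱^{π_{θ̃}}_{r*}(ρ) = β Σ_x ρ(x) Σ_y π_{θ̃}(y|x) ψ(x,y)ᵀ(θ̃ − θ*) + β (A(θ*) − A(θ̃)), where A(θ) = Σ_x ρ(x) log Σ_{y∈𝒴} exp(θᵀψ(x,y)). -/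
open scoped BigOperators RealInnerProductSpace

noncomputable section

/-- The loglinear (softmax) policy with feature map `ψ` and parameter `θ`:
`π_θ(y|x) = exp(θᵀψ(x,y)) / Σ_{y'} exp(θᵀψ(x,y'))`. -/
def loglinear {X Y : Type*} [Fintype Y] {d : ℕ}
    (ψ : X → Y → EuclideanSpace ℝ (Fin d)) (θ : EuclideanSpace ℝ (Fin d))
    (x : X) (y : Y) : ℝ :=
  Real.exp ⟪θ, ψ x y⟫ / ∑ y' : Y, Real.exp ⟪θ, ψ x y'⟫

/-- `π` maps every context to a probability distribution over actions. -/
def IsPolicy {X Y : Type*} [Fintype Y] (π : X → Y → ℝ) : Prop :=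
  (∀ x y, 0 ≤ π x y) ∧ ∀ x, ∑ y : Y, π x y = 1

/-- The value `V^π_r(ρ) = Σ_x ρ(x) Σ_y π(y|x) r(x,y)`. -/
def valueV {X Y : Type*} [Fintype X] [Fintype Y]
    (ρ : X → ℝ) (π : X → Y → ℝ) (r : X → Y → ℝ) : ℝ :=
  ∑ x : X, ρ x * ∑ y : Y, π x y * r x y

/-- `D_KL(π‖μ) = Σ_x ρ(x) Σ_y π(y|x) log(π(y|x)/μ(y|x))`. -/
def klDiv {X Y : Type*} [Fintype X] [Fintype Y]
    (ρ : X → ℝ) (π μ : X → Y → ℝ) : ℝ :=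
  ∑ x : X, ρ x * ∑ y : Y, π x y * Real.log (π x y / μ x y)

/-- The KL-regularized objective `𝒱^π_r(ρ) = V^π_r(ρ) − β D_KL(π‖μ)`. -/
def regValue {X Y : Type*} [Fintype X] [Fintype Y]
    (ρ : X → ℝ) (π : X → Y → ℝ) (r : X → Y → ℝ) (β : ℝ) (μ : X → Y → ℝ) : ℝ :=
  valueV ρ π r - β * klDiv ρ π μ

/-- The log-partition function `A(θ) = Σ_x ρ(x) log Σ_y exp(θᵀψ(x,y))`. -/
def logPartition {X Y : Type*} [Fintype X] [Fintype Y] {d : ℕ}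
    (ρ : X → ℝ) (ψ : X → Y → EuclideanSpace ℝ (Fin d))
    (θ : EuclideanSpace ℝ (Fin d)) : ℝ :=
  ∑ x : X, ρ x * Real.log (∑ y : Y, Real.exp ⟪θ, ψ x y⟫)


section auxLemmas
variable {X Y : Type*} [Fintype Y] [Nonempty Y] {d : ℕ}
  (ψ : X → Y → EuclideanSpace ℝ (Fin d))

lemma Spos (θ : EuclideanSpace ℝ (Fin d)) (x : X) :
    0 < ∑ y' : Y, Real.exp ⟪θ, ψ x y'⟫ :=
  Finset.sum_pos (fun _ _ => Real.exp_pos _) Finset.univ_nonempty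

lemma ll_pos (θ : EuclideanSpace ℝ (Fin d)) (x : X) (y : Y) : 0 < loglinear ψ θ x y :=
  div_pos (Real.exp_pos _) (Spos ψ θ x)

lemma ll_sum (θ : EuclideanSpace ℝ (Fin d)) (x : X) : ∑ y : Y, loglinear ψ θ x y = 1 := by
  unfold loglinear
  rw [← Finset.sum_div, div_self (Spos ψ θ x).ne']

lemma log_ll (θ : EuclideanSpace ℝ (Fin d)) (x : X) (y : Y) :
    Real.log (loglinear ψ θ x y)
      = ⟪θ, ψ x y⟫ - Real.log (∑ y' : Y, Real.exp ⟪θ, ψ x y'⟫) := by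
  unfold loglinear
  rw [Real.log_div (Real.exp_ne_zero _) (Spos ψ θ x).ne', Real.log_exp]
end auxLemmas

/-- If `r*(x,y) = β log(π_{θ*}(y|x)/μ(y|x)) + β c(x)`, then for every `θ̃`,
`𝒱^{π_{θ*}}_{r*}(ρ) − 𝒱^{π_{θ̃}}_{r*}(ρ)
  = β Σ_x ρ(x) Σ_y π_{θ̃}(y|x) ψ(x,y)ᵀ(θ̃ − θ*) + β (A(θ*) − A(θ̃))`. -/
theorem statement2 {X Y : Type*} [Fintype X] [Fintype Y] [Nonempty Y] {dP : ℕ}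
    (ψ : X → Y → EuclideanSpace ℝ (Fin dP)) (hψ : ∀ x y, ‖ψ x y‖ ≤ 1)
    (ρ : X → ℝ) (hρ0 : ∀ x, 0 ≤ ρ x) (hρ1 : ∑ x : X, ρ x = 1)
    (μ : X → Y → ℝ) (hμ : ∀ x y, 0 < μ x y)
    (β : ℝ) (hβ : 0 < β)
    (rstar : X → Y → ℝ)
    (θstar : EuclideanSpace ℝ (Fin dP)) (c : X → ℝ)
    (hrstar : ∀ x y, rstar x y =
      β * Real.log (loglinear ψ θstar x y / μ x y) + β * c x) :
    ∀ θt : EuclideanSpace ℝ (Fin dP),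
      regValue ρ (loglinear ψ θstar) rstar β μ - regValue ρ (loglinear ψ θt) rstar β μ =
        β * ∑ x : X, ρ x * ∑ y : Y, loglinear ψ θt x y * ⟪ψ x y, θt - θstar⟫ +
          β * (logPartition ρ ψ θstar - logPartition ρ ψ θt) := by
  intro θt
  have key : ∀ θ : EuclideanSpace ℝ (Fin dP),
      regValue ρ (loglinear ψ θ) rstar β μ
        = β * (∑ x : X, ρ x * ∑ y : Y, loglinear ψ θ x y *
              (Real.log (loglinear ψ θstar x y) - Real.log (loglinear ψ θ x y)))
          + β * ∑ x : X, ρ x * c x := by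
    intro θ
    unfold regValue valueV klDiv
    rw [Finset.mul_sum, Finset.mul_sum, Finset.mul_sum, ← Finset.sum_sub_distrib,
      ← Finset.sum_add_distrib]
    refine Finset.sum_congr rfl fun x _ => ?_
    have h : ∑ y : Y, loglinear ψ θ x y * rstar x y
        = β * (∑ y : Y, loglinear ψ θ x y * Real.log (loglinear ψ θ x y / μ x y))
          + β * (∑ y : Y, loglinear ψ θ x y *
              (Real.log (loglinear ψ θstar x y) - Real.log (loglinear ψ θ x y)))
          + β * c x := by
      have step : ∀ y : Y, loglinear ψ θ x y * rstar x y
          = β * (loglinear ψ θ x y * Real.log (loglinear ψ θ x y / μ x y))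
            + β * (loglinear ψ θ x y *
                (Real.log (loglinear ψ θstar x y) - Real.log (loglinear ψ θ x y)))
            + β * (loglinear ψ θ x y * c x) := by
        intro y
        rw [hrstar x y,
          Real.log_div (ll_pos ψ θstar x y).ne' (hμ x y).ne',
          Real.log_div (ll_pos ψ θ x y).ne' (hμ x y).ne']
        ring
      rw [Finset.sum_congr rfl fun y _ => step y, Finset.sum_add_distrib,
        Finset.sum_add_distrib, ← Finset.mul_sum, ← Finset.mul_sum, ← Finset.mul_sum,
        ← Finset.sum_mul, ll_sum, one_mul]
    rw [h]; ring
  have hmain : ∀ x : X, ∑ y : Y, loglinear ψ θt x y *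
      (Real.log (loglinear ψ θstar x y) - Real.log (loglinear ψ θt x y))
      = -((∑ y : Y, loglinear ψ θt x y * ⟪ψ x y, θt - θstar⟫)
          + (Real.log (∑ y : Y, Real.exp ⟪θstar, ψ x y⟫)
             - Real.log (∑ y : Y, Real.exp ⟪θt, ψ x y⟫))) := by
    intro x
    have step : ∀ y : Y, loglinear ψ θt x y *
        (Real.log (loglinear ψ θstar x y) - Real.log (loglinear ψ θt x y))
        = -(loglinear ψ θt x y * ⟪ψ x y, θt - θstar⟫)
          - loglinear ψ θt x y * (Real.log (∑ y' : Y, Real.exp ⟪θstar, ψ x y'⟫)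
             - Real.log (∑ y' : Y, Real.exp ⟪θt, ψ x y'⟫)) := by
      intro y
      rw [log_ll ψ θstar x y, log_ll ψ θt x y]
      have hi : (⟪ψ x y, θt - θstar⟫ : ℝ) = ⟪θt, ψ x y⟫ - ⟪θstar, ψ x y⟫ := by
        rw [inner_sub_right, real_inner_comm (ψ x y) θt, real_inner_comm (ψ x y) θstar]
      rw [hi]; ring
    rw [Finset.sum_congr rfl fun y _ => step y, Finset.sum_sub_distrib,
      Finset.sum_neg_distrib, ← Finset.sum_mul, ll_sum, one_mul]
    ring
  have h1 : (∑ x : X, ρ x * ∑ y : Y, loglinear ψ θstar x y *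
      (Real.log (loglinear ψ θstar x y) - Real.log (loglinear ψ θstar x y))) = 0 := by
    simp
  have h2 : (∑ x : X, ρ x * ∑ y : Y, loglinear ψ θt x y *
      (Real.log (loglinear ψ θstar x y) - Real.log (loglinear ψ θt x y)))
      = -((∑ x : X, ρ x * ∑ y : Y, loglinear ψ θt x y * ⟪ψ x y, θt - θstar⟫)
          + ((∑ x : X, ρ x * Real.log (∑ y : Y, Real.exp ⟪θstar, ψ x y⟫))
             - ∑ x : X, ρ x * Real.log (∑ y : Y, Real.exp ⟪θt, ψ x y⟫))) := by
    rw [show (∑ x : X, ρ x * ∑ y : Y, loglinear ψ θt x y *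
        (Real.log (loglinear ψ θstar x y) - Real.log (loglinear ψ θt x y)))
      = ∑ x : X, (-(ρ x * ∑ y : Y, loglinear ψ θt x y * ⟪ψ x y, θt - θstar⟫)
          - (ρ x * Real.log (∑ y : Y, Real.exp ⟪θstar, ψ x y⟫)
             - ρ x * Real.log (∑ y : Y, Real.exp ⟪θt, ψ x y⟫)))
      from Finset.sum_congr rfl fun x _ => by rw [hmain x]; ring]
    rw [Finset.sum_sub_distrib, Finset.sum_neg_distrib, Finset.sum_sub_distrib]
    ring
  rw [key θstar, key θt, h1, h2]
  unfold logPartition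
  ring
end
end

section
/- Suppose the reward r* satisfies r*(x,y) = β log(π_{θ*}(y|x)/μ(y|x)) + β c(x) for all (x,y), for some θ* ∈ ℝ^{d_P} and some function c : 𝒳 → ℝ. Then for every θ̃ ∈ ℝ^{d_P}: 𝒱^{π_{θ*}}_{r*}(ρ) − 𝒱^{π_{θ̃}}_{r*}(ρ) ≤ β ‖θ* − θ̃‖₂². -/
open scoped BigOperators RealInnerProductSpace

noncomputable section

section AuxLemmas

-- quadratic bounds on exp
lemma exp_le_quad {x : ℝ} (hx : x ≤ 0) : Real.exp x ≤ 1 + x + x^2/2 := by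
  have hd : ∀ t : ℝ, HasDerivAt (fun z : ℝ => 1 + z + z^2/2 - Real.exp z)
      (1 + t - Real.exp t) t := by
    intro t
    have h1 : HasDerivAt (fun z : ℝ => 1 + z) 1 t := (hasDerivAt_id t).const_add 1
    have h2 : HasDerivAt (fun z : ℝ => z^2/2) t t := by
      simpa using (hasDerivAt_pow 2 t).div_const 2
    exact (h1.add h2).sub (Real.hasDerivAt_exp t)
  have hanti : Antitone (fun z : ℝ => 1 + z + z^2/2 - Real.exp z) := by
    apply antitone_of_deriv_nonpos
    · intro t; exact (hd t).differentiableAt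
    · intro t; rw [(hd t).deriv]; linarith [Real.add_one_le_exp t]
  have := hanti hx
  simp only [Real.exp_zero] at this
  nlinarith [this]

lemma quad_le_exp {x : ℝ} (hx : 0 ≤ x) : 1 + x + x^2/2 ≤ Real.exp x := by
  have hd : ∀ t : ℝ, HasDerivAt (fun z : ℝ => Real.exp z - (1 + z + z^2/2))
      (Real.exp t - (1 + t)) t := by
    intro t
    have h1 : HasDerivAt (fun z : ℝ => 1 + z) 1 t := (hasDerivAt_id t).const_add 1
    have h2 : HasDerivAt (fun z : ℝ => z^2/2) t t := by
      simpa using (hasDerivAt_pow 2 t).div_const 2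
    exact (Real.hasDerivAt_exp t).sub (h1.add h2)
  have hmono : Monotone (fun z : ℝ => Real.exp z - (1 + z + z^2/2)) := by
    apply monotone_of_deriv_nonneg
    · intro t; exact (hd t).differentiableAt
    · intro t; rw [(hd t).deriv]; linarith [Real.add_one_le_exp t]
  have := hmono hx
  simp only [Real.exp_zero] at this
  nlinarith [this]

-- chord bound for exp on [-s, s]
lemma exp_chord {s u : ℝ} (hs : 0 < s) (hu : |u| ≤ s) :
    Real.exp u ≤ (Real.exp (-s) + Real.exp s)/2 + (Real.exp s - Real.exp (-s))/(2*s) * u := by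
  have h1 : -s ≤ u := neg_le_of_abs_le hu
  have h2 : u ≤ s := le_of_abs_le hu
  have ha : (0:ℝ) ≤ (s - u)/(2*s) := div_nonneg (by linarith) (by linarith)
  have hb : (0:ℝ) ≤ (s + u)/(2*s) := div_nonneg (by linarith) (by linarith)
  have hab : (s - u)/(2*s) + (s + u)/(2*s) = 1 := by field_simp; ring
  have := convexOn_exp.2 (Set.mem_univ (-s)) (Set.mem_univ s) ha hb hab
  simp only [smul_eq_mul] at this
  have heq : (s - u)/(2*s) * (-s) + (s + u)/(2*s) * s = u := by field_simp; ring
  rw [heq] at this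
  have hss : s ≠ 0 := ne_of_gt hs
  calc Real.exp u ≤ (s - u)/(2*s) * Real.exp (-s) + (s + u)/(2*s) * Real.exp s := this
    _ = (Real.exp (-s) + Real.exp s)/2 + (Real.exp s - Real.exp (-s))/(2*s) * u := by
        field_simp; ring

-- chord bound for exp on [0,1]
lemma exp_chord01 {t : ℝ} (h0 : 0 ≤ t) (h1 : t ≤ 1) :
    Real.exp t ≤ (1 - t) + t * Real.exp 1 := by
  have := convexOn_exp.2 (Set.mem_univ (0:ℝ)) (Set.mem_univ (1:ℝ)) (by linarith : (0:ℝ) ≤ 1 - t)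
    h0 (by ring)
  simp only [smul_eq_mul] at this
  simpa [Real.exp_zero] using this

-- cosh s - 1 ≤ s^2 for 0 ≤ s ≤ 2
lemma cosh_bound {s : ℝ} (h0 : 0 ≤ s) (h2 : s ≤ 2) :
    (Real.exp (-s) + Real.exp s)/2 - 1 ≤ s^2 := by
  set t := s/2 with ht
  have ht0 : 0 ≤ t := by positivity
  have ht1 : t ≤ 1 := by simp only [ht]; linarith
  have ha : Real.exp s = Real.exp t * Real.exp t := by
    rw [← Real.exp_add]; congr 1; simp only [ht]; ring
  have hb : Real.exp (-s) = Real.exp (-t) * Real.exp (-t) := by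
    rw [← Real.exp_add]; congr 1; simp only [ht]; ring
  have hinv : Real.exp t * Real.exp (-t) = 1 := by rw [← Real.exp_add]; simp
  -- exp t - exp (-t) ≤ t * exp 1
  have hup : Real.exp t ≤ (1 - t) + t * Real.exp 1 := exp_chord01 ht0 ht1
  have hlow : 1 - t ≤ Real.exp (-t) := by linarith [Real.add_one_le_exp (-t)]
  have hdiff : Real.exp t - Real.exp (-t) ≤ t * Real.exp 1 := by linarith
  have hdiff0 : 0 ≤ Real.exp t - Real.exp (-t) :=
    sub_nonneg.2 (Real.exp_le_exp.2 (by linarith))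
  have he : Real.exp 1 < 2.7182818286 := Real.exp_one_lt_d9
  have he0 : 0 < Real.exp 1 := Real.exp_pos 1
  have he8 : Real.exp 1 ^ 2 ≤ 8 := by nlinarith
  have hsq : (Real.exp t - Real.exp (-t))^2 ≤ t^2 * 8 := by
    have h1 := pow_le_pow_left₀ hdiff0 hdiff 2
    nlinarith [sq_nonneg t, h1, he8]
  have hid : (Real.exp (-s) + Real.exp s)/2 - 1 = (Real.exp t - Real.exp (-t))^2/2 := by
    rw [ha, hb]; nlinarith [hinv]
  rw [hid]
  have : t^2 * 8 / 2 = s^2 := by simp only [ht]; ring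
  linarith

lemma sum_affine {Y : Type*} [Fintype Y] {p : Y → ℝ} (hp1 : ∑ y, p y = 1)
    (a b c : ℝ) (f g : Y → ℝ) :
    ∑ y, p y * (a + b * f y + c * g y)
      = a + b * (∑ y, p y * f y) + c * (∑ y, p y * g y) := by
  calc ∑ y, p y * (a + b * f y + c * g y)
      = ∑ y, (a * p y + b * (p y * f y) + c * (p y * g y)) :=
        Finset.sum_congr rfl (fun y _ => by ring)
    _ = a * (∑ y, p y) + b * (∑ y, p y * f y) + c * (∑ y, p y * g y) := by
        rw [Finset.sum_add_distrib, Finset.sum_add_distrib, ← Finset.mul_sum,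
          ← Finset.mul_sum, ← Finset.mul_sum]
    _ = _ := by rw [hp1, mul_one]

lemma key_mgf {Y : Type*} [Fintype Y] (p u : Y → ℝ) (hp0 : ∀ y, 0 ≤ p y)
    (hp1 : ∑ y, p y = 1) {s : ℝ} (hs : 0 ≤ s) (hu : ∀ y, |u y| ≤ s) :
    Real.log (∑ y, p y * Real.exp (u y)) - (∑ y, p y * u y) ≤ s ^ 2 := by
  have hpos : ∀ (v : Y → ℝ), 0 < ∑ y, p y * Real.exp (v y) := by
    intro v
    have hne : ∃ y, p y ≠ 0 := by
      by_contra h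
      push_neg at h
      rw [Finset.sum_congr rfl (fun y _ => h y)] at hp1
      simp at hp1
    obtain ⟨y₀, hy₀⟩ := hne
    exact Finset.sum_pos' (fun y _ => mul_nonneg (hp0 y) (Real.exp_pos _).le)
      ⟨y₀, Finset.mem_univ _, mul_pos ((hp0 y₀).lt_of_ne (Ne.symm hy₀)) (Real.exp_pos _)⟩
  set m := ∑ y, p y * u y with hm_def
  have hm : |m| ≤ s := by
    calc |m| ≤ ∑ y, |p y * u y| := Finset.abs_sum_le_sum_abs _ _
      _ ≤ ∑ y, p y * s := by
          apply Finset.sum_le_sum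
          intro y _
          rw [abs_mul, abs_of_nonneg (hp0 y)]
          exact mul_le_mul_of_nonneg_left (hu y) (hp0 y)
      _ = s := by rw [← Finset.sum_mul, hp1, one_mul]
  rcases le_or_gt 2 s with hs2 | hs2
  · -- large s : crude bound
    have h1 : ∑ y, p y * Real.exp (u y) ≤ Real.exp s := by
      calc ∑ y, p y * Real.exp (u y) ≤ ∑ y, p y * Real.exp s := by
            apply Finset.sum_le_sum
            intro y _
            exact mul_le_mul_of_nonneg_left (Real.exp_le_exp.2 (le_of_abs_le (hu y))) (hp0 y)
        _ = Real.exp s := by rw [← Finset.sum_mul, hp1, one_mul]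
    have h2 : Real.log (∑ y, p y * Real.exp (u y)) ≤ s :=
      calc Real.log (∑ y, p y * Real.exp (u y)) ≤ Real.log (Real.exp s) :=
            Real.log_le_log (hpos u) h1
        _ = s := Real.log_exp s
    have := abs_le.1 hm
    nlinarith
  · rcases le_or_gt 0 m with hm0 | hm0
    · -- m ≥ 0 : shifted quadratic bound
      have hfac : (∑ y, p y * Real.exp (u y)) = (∑ y, p y * Real.exp (u y - s)) * Real.exp s := by
        rw [Finset.sum_mul]
        apply Finset.sum_congr rfl
        intro y _
        rw [mul_assoc, ← Real.exp_add]
        ring_nf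
      have hu2 : (∑ y, p y * (u y)^2) ≤ s^2 := by
        calc (∑ y, p y * (u y)^2) ≤ ∑ y, p y * s^2 := by
              apply Finset.sum_le_sum
              intro y _
              exact mul_le_mul_of_nonneg_left
                (sq_le_sq' (neg_le_of_abs_le (hu y)) (le_of_abs_le (hu y))) (hp0 y)
          _ = s^2 := by rw [← Finset.sum_mul, hp1, one_mul]
      have hB : (∑ y, p y * Real.exp (u y - s)) ≤ 1 + (m - s) + (s^2 - s*m) := by
        calc (∑ y, p y * Real.exp (u y - s))
            ≤ ∑ y, p y * ((1 - s + s^2/2) + (1 - s) * u y + (1/2) * (u y)^2) := by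
              apply Finset.sum_le_sum
              intro y _
              refine mul_le_mul_of_nonneg_left ?_ (hp0 y)
              calc Real.exp (u y - s) ≤ 1 + (u y - s) + (u y - s)^2/2 :=
                    exp_le_quad (by linarith [le_of_abs_le (hu y)])
                _ = (1 - s + s^2/2) + (1 - s) * u y + (1/2) * (u y)^2 := by ring
          _ = (1 - s + s^2/2) + (1 - s) * m + (1/2) * (∑ y, p y * (u y)^2) :=
              sum_affine hp1 _ _ _ _ _
          _ ≤ 1 + (m - s) + (s^2 - s*m) := by nlinarith [hu2]
      have hBpos : 0 < ∑ y, p y * Real.exp (u y - s) := hpos _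
      have hlog : Real.log (∑ y, p y * Real.exp (u y)) ≤ s + ((m - s) + (s^2 - s*m)) := by
        rw [hfac, Real.log_mul (ne_of_gt hBpos) (Real.exp_ne_zero s), Real.log_exp]
        have h1 : Real.log (∑ y, p y * Real.exp (u y - s))
            ≤ (1 + (m - s) + (s^2 - s*m)) - 1 :=
          calc Real.log (∑ y, p y * Real.exp (u y - s))
              ≤ (∑ y, p y * Real.exp (u y - s)) - 1 := Real.log_le_sub_one_of_pos hBpos
            _ ≤ _ := by linarith
        linarith
      nlinarith [mul_nonneg hs hm0]
    · -- m < 0 : chord bound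
      have hspos : 0 < s := by
        rcases hs.lt_or_eq with h | h
        · exact h
        · exfalso
          have hz : m = 0 := by
            rw [hm_def]
            apply Finset.sum_eq_zero
            intro y _
            have h1 := hu y
            rw [← h] at h1
            have : u y = 0 := abs_nonpos_iff.1 h1
            simp [this]
          linarith
      set c0 := (Real.exp (-s) + Real.exp s)/2 with hc0
      set c1 := (Real.exp s - Real.exp (-s))/(2*s) with hc1
      have hsum : (∑ y, p y * Real.exp (u y)) ≤ c0 + c1 * m := by
        calc (∑ y, p y * Real.exp (u y)) ≤ ∑ y, p y * (c0 + c1 * u y + 0 * u y) := by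
              apply Finset.sum_le_sum
              intro y _
              refine mul_le_mul_of_nonneg_left ?_ (hp0 y)
              simpa using exp_chord hspos (hu y)
          _ = c0 + c1 * m + 0 * m := sum_affine hp1 _ _ _ _ _
          _ = c0 + c1 * m := by ring
      have hCpos : 0 < c0 + c1 * m := lt_of_lt_of_le (hpos u) hsum
      have hlog : Real.log (∑ y, p y * Real.exp (u y)) ≤ c0 + c1 * m - 1 :=
        calc Real.log (∑ y, p y * Real.exp (u y)) ≤ Real.log (c0 + c1 * m) :=
              Real.log_le_log (hpos u) hsum
          _ ≤ c0 + c1 * m - 1 := Real.log_le_sub_one_of_pos hCpos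
      have hc1ge : 1 ≤ c1 := by
        rw [hc1, le_div_iff₀ (by positivity)]
        have h1 := quad_le_exp hs
        have h2 := exp_le_quad (neg_nonpos_of_nonneg hs)
        nlinarith
      have hcosh : c0 - 1 ≤ s^2 := cosh_bound hs (le_of_lt hs2)
      nlinarith [mul_nonneg (le_of_lt (neg_pos.2 hm0)) (sub_nonneg.2 hc1ge)]

section Policy

variable {X Y : Type*} [Fintype Y] [Nonempty Y] {dP : ℕ}
  (ψ : X → Y → EuclideanSpace ℝ (Fin dP))

lemma Zpos (θ : EuclideanSpace ℝ (Fin dP)) (x : X) :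
    0 < ∑ y' : Y, Real.exp ⟪θ, ψ x y'⟫ :=
  Finset.sum_pos (fun y _ => Real.exp_pos _) Finset.univ_nonempty

lemma loglinear_pos (θ : EuclideanSpace ℝ (Fin dP)) (x : X) (y : Y) :
    0 < loglinear ψ θ x y :=
  div_pos (Real.exp_pos _) (Zpos ψ θ x)

lemma loglinear_sum (θ : EuclideanSpace ℝ (Fin dP)) (x : X) :
    ∑ y : Y, loglinear ψ θ x y = 1 := by
  unfold loglinear
  rw [← Finset.sum_div, div_self (ne_of_gt (Zpos ψ θ x))]

lemma log_loglinear (θ : EuclideanSpace ℝ (Fin dP)) (x : X) (y : Y) :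
    Real.log (loglinear ψ θ x y)
      = ⟪θ, ψ x y⟫ - Real.log (∑ y' : Y, Real.exp ⟪θ, ψ x y'⟫) := by
  unfold loglinear
  rw [Real.log_div (Real.exp_ne_zero _) (ne_of_gt (Zpos ψ θ x)), Real.log_exp]

lemma kl_le (hψ : ∀ x y, ‖ψ x y‖ ≤ 1)
    (θs θt : EuclideanSpace ℝ (Fin dP)) (x : X) :
    ∑ y : Y, loglinear ψ θt x y *
      Real.log (loglinear ψ θt x y / loglinear ψ θs x y) ≤ ‖θs - θt‖ ^ 2 := by
  set p : Y → ℝ := loglinear ψ θt x with hp_def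
  set u : Y → ℝ := fun y => ⟪θs - θt, ψ x y⟫ with hu_def
  have hp0 : ∀ y, 0 ≤ p y := fun y => (loglinear_pos ψ θt x y).le
  have hp1 : ∑ y, p y = 1 := loglinear_sum ψ θt x
  have hu : ∀ y, |u y| ≤ ‖θs - θt‖ := by
    intro y
    calc |u y| ≤ ‖θs - θt‖ * ‖ψ x y‖ := abs_real_inner_le_norm _ _
      _ ≤ ‖θs - θt‖ := mul_le_of_le_one_right (norm_nonneg _) (hψ x y)
  set C : ℝ := Real.log (∑ y' : Y, Real.exp ⟪θs, ψ x y'⟫)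
    - Real.log (∑ y' : Y, Real.exp ⟪θt, ψ x y'⟫) with hC_def
  have hlograt : ∀ y, Real.log (p y / loglinear ψ θs x y) = C + (-1) * u y + 0 * u y := by
    intro y
    rw [hp_def, Real.log_div (ne_of_gt (loglinear_pos ψ θt x y))
        (ne_of_gt (loglinear_pos ψ θs x y)), log_loglinear, log_loglinear]
    simp only [hu_def, inner_sub_left, hC_def]
    ring
  have hmgf : (∑ y, p y * Real.exp (u y))
      = (∑ y' : Y, Real.exp ⟪θs, ψ x y'⟫) / (∑ y' : Y, Real.exp ⟪θt, ψ x y'⟫) := by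
    rw [eq_div_iff (ne_of_gt (Zpos ψ θt x)), Finset.sum_mul]
    apply Finset.sum_congr rfl
    intro y _
    rw [hp_def]
    unfold loglinear
    rw [div_mul_eq_mul_div, div_mul_cancel₀ _ (ne_of_gt (Zpos ψ θt x)), ← Real.exp_add]
    congr 1
    simp only [hu_def, inner_sub_left]
    ring
  have hlogmgf : Real.log (∑ y, p y * Real.exp (u y)) = C := by
    rw [hmgf, Real.log_div (ne_of_gt (Zpos ψ θs x)) (ne_of_gt (Zpos ψ θt x)), hC_def]
  calc ∑ y : Y, p y * Real.log (p y / loglinear ψ θs x y)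
      = ∑ y, p y * (C + (-1) * u y + 0 * u y) :=
        Finset.sum_congr rfl (fun y _ => by rw [hlograt y])
    _ = C + (-1) * (∑ y, p y * u y) + 0 * (∑ y, p y * u y) := sum_affine hp1 _ _ _ _ _
    _ = Real.log (∑ y, p y * Real.exp (u y)) - (∑ y, p y * u y) := by rw [hlogmgf]; ring
    _ ≤ ‖θs - θt‖ ^ 2 := key_mgf p u hp0 hp1 (norm_nonneg _) hu

end Policy
end AuxLemmas

/-- If `r*(x,y) = β log(π_{θ*}(y|x)/μ(y|x)) + β c(x)`, then for every `θ̃`,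
`𝒱^{π_{θ*}}_{r*}(ρ) − 𝒱^{π_{θ̃}}_{r*}(ρ) ≤ β ‖θ* − θ̃‖₂²`. -/
theorem statement3 {X Y : Type*} [Fintype X] [Fintype Y] [Nonempty Y] {dP : ℕ}
    (ψ : X → Y → EuclideanSpace ℝ (Fin dP)) (hψ : ∀ x y, ‖ψ x y‖ ≤ 1)
    (ρ : X → ℝ) (hρ0 : ∀ x, 0 ≤ ρ x) (hρ1 : ∑ x : X, ρ x = 1)
    (μ : X → Y → ℝ) (hμ : ∀ x y, 0 < μ x y)
    (β : ℝ) (hβ : 0 < β)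
    (rstar : X → Y → ℝ)
    (θstar : EuclideanSpace ℝ (Fin dP)) (c : X → ℝ)
    (hrstar : ∀ x y, rstar x y =
      β * Real.log (loglinear ψ θstar x y / μ x y) + β * c x) :
    ∀ θt : EuclideanSpace ℝ (Fin dP),
      regValue ρ (loglinear ψ θstar) rstar β μ - regValue ρ (loglinear ψ θt) rstar β μ ≤
        β * ‖θstar - θt‖ ^ 2 := by
  intro θt
  have hval : ∀ θ : EuclideanSpace ℝ (Fin dP),
      regValue ρ (loglinear ψ θ) rstar β μ
        = β * ∑ x : X, ρ x * (c x - ∑ y : Y, loglinear ψ θ x y *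
            Real.log (loglinear ψ θ x y / loglinear ψ θstar x y)) := by
    intro θ
    unfold regValue valueV klDiv
    rw [Finset.mul_sum, Finset.mul_sum, ← Finset.sum_sub_distrib]
    apply Finset.sum_congr rfl
    intro x _
    have hx : (∑ y : Y, loglinear ψ θ x y * rstar x y)
        - β * ∑ y : Y, loglinear ψ θ x y * Real.log (loglinear ψ θ x y / μ x y)
        = β * (c x - ∑ y : Y, loglinear ψ θ x y *
            Real.log (loglinear ψ θ x y / loglinear ψ θstar x y)) := by
      have e1 : ∀ y : Y, loglinear ψ θ x y * rstar x y
          - β * (loglinear ψ θ x y * Real.log (loglinear ψ θ x y / μ x y))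
          = loglinear ψ θ x y * (β * c x + (-β) * Real.log (loglinear ψ θ x y /
              loglinear ψ θstar x y) + 0 * Real.log (loglinear ψ θ x y /
              loglinear ψ θstar x y)) := by
        intro y
        rw [hrstar x y,
          Real.log_div (ne_of_gt (loglinear_pos ψ θstar x y)) (ne_of_gt (hμ x y)),
          Real.log_div (ne_of_gt (loglinear_pos ψ θ x y)) (ne_of_gt (hμ x y)),
          Real.log_div (ne_of_gt (loglinear_pos ψ θ x y))
            (ne_of_gt (loglinear_pos ψ θstar x y))]
        ring
      calc (∑ y : Y, loglinear ψ θ x y * rstar x y)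
          - β * ∑ y : Y, loglinear ψ θ x y * Real.log (loglinear ψ θ x y / μ x y)
          = ∑ y : Y, (loglinear ψ θ x y * rstar x y
              - β * (loglinear ψ θ x y * Real.log (loglinear ψ θ x y / μ x y))) := by
            rw [Finset.sum_sub_distrib, Finset.mul_sum]
        _ = ∑ y : Y, loglinear ψ θ x y * (β * c x + (-β) * Real.log (loglinear ψ θ x y /
              loglinear ψ θstar x y) + 0 * Real.log (loglinear ψ θ x y /
              loglinear ψ θstar x y)) :=
            Finset.sum_congr rfl (fun y _ => e1 y)
        _ = β * c x + (-β) * (∑ y : Y, loglinear ψ θ x y * Real.log (loglinear ψ θ x y /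
              loglinear ψ θstar x y)) + 0 * (∑ y : Y, loglinear ψ θ x y *
              Real.log (loglinear ψ θ x y / loglinear ψ θstar x y)) :=
            sum_affine (loglinear_sum ψ θ x) _ _ _ _ _
        _ = β * (c x - ∑ y : Y, loglinear ψ θ x y *
              Real.log (loglinear ψ θ x y / loglinear ψ θstar x y)) := by ring
    calc ρ x * (∑ y : Y, loglinear ψ θ x y * rstar x y)
        - β * (ρ x * ∑ y : Y, loglinear ψ θ x y * Real.log (loglinear ψ θ x y / μ x y))
        = ρ x * ((∑ y : Y, loglinear ψ θ x y * rstar x y)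
            - β * ∑ y : Y, loglinear ψ θ x y * Real.log (loglinear ψ θ x y / μ x y)) := by
          ring
      _ = ρ x * (β * (c x - ∑ y : Y, loglinear ψ θ x y *
            Real.log (loglinear ψ θ x y / loglinear ψ θstar x y))) := by rw [hx]
      _ = β * (ρ x * (c x - ∑ y : Y, loglinear ψ θ x y *
            Real.log (loglinear ψ θ x y / loglinear ψ θstar x y))) := by ring
  have hzero : ∀ x : X, (∑ y : Y, loglinear ψ θstar x y *
      Real.log (loglinear ψ θstar x y / loglinear ψ θstar x y)) = 0 := by
    intro x
    apply Finset.sum_eq_zero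
    intro y _
    rw [div_self (ne_of_gt (loglinear_pos ψ θstar x y)), Real.log_one, mul_zero]
  have hdiff : regValue ρ (loglinear ψ θstar) rstar β μ
      - regValue ρ (loglinear ψ θt) rstar β μ
      = β * ∑ x : X, ρ x * (∑ y : Y, loglinear ψ θt x y *
          Real.log (loglinear ψ θt x y / loglinear ψ θstar x y)) := by
    rw [hval θstar, hval θt, ← mul_sub, ← Finset.sum_sub_distrib]
    congr 1
    apply Finset.sum_congr rfl
    intro x _
    rw [hzero x]
    ring
  rw [hdiff]
  have hsum : (∑ x : X, ρ x * (∑ y : Y, loglinear ψ θt x y *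
      Real.log (loglinear ψ θt x y / loglinear ψ θstar x y))) ≤ ‖θstar - θt‖ ^ 2 := by
    calc (∑ x : X, ρ x * (∑ y : Y, loglinear ψ θt x y *
        Real.log (loglinear ψ θt x y / loglinear ψ θstar x y)))
        ≤ ∑ x : X, ρ x * ‖θstar - θt‖ ^ 2 := by
          apply Finset.sum_le_sum
          intro x _
          exact mul_le_mul_of_nonneg_left (kl_le ψ hψ θstar θt x) (hρ0 x)
      _ = ‖θstar - θt‖ ^ 2 := by rw [← Finset.sum_mul, hρ1, one_mul]
  exact mul_le_mul_of_nonneg_left hsum hβ.le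
end
end

section
/- Suppose the reward r* satisfies r*(x,y) = β log(π_{θ*}(y|x)/μ(y|x)) + β c(x) for all (x,y), for some θ* ∈ ℝ^{d_P} and some function c : 𝒳 → ℝ, and suppose the log-partition function A(θ) = Σ_x ρ(x) log Σ_{y∈𝒴} exp(θᵀψ(x,y)) is κ-strongly convex (for some κ > 0) on a convex set containing θ* and θ̃. Then 𝒱^{π_{θ*}}_{r*}(ρ) − 𝒱^{π_{θ̃}}_{r*}(ρ) ≥ (βκ/2) ‖θ̃ − θ*‖₂². -/
open scoped BigOperators RealInnerProductSpace

noncomputable section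

/-- If `r*(x,y) = β log(π_{θ*}(y|x)/μ(y|x)) + β c(x)` and the log-partition
function `A` is `κ`-strongly convex (`κ > 0`) on a convex set containing `θ*` and `θ̃`, then
`𝒱^{π_{θ*}}_{r*}(ρ) − 𝒱^{π_{θ̃}}_{r*}(ρ) ≥ (βκ/2) ‖θ̃ − θ*‖₂²`. -/
theorem statement4 {X Y : Type*} [Fintype X] [Fintype Y] [Nonempty Y] {dP : ℕ}
    (ψ : X → Y → EuclideanSpace ℝ (Fin dP)) (hψ : ∀ x y, ‖ψ x y‖ ≤ 1)
    (ρ : X → ℝ) (hρ0 : ∀ x, 0 ≤ ρ x) (hρ1 : ∑ x : X, ρ x = 1)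
    (μ : X → Y → ℝ) (hμ : ∀ x y, 0 < μ x y)
    (β : ℝ) (hβ : 0 < β)
    (rstar : X → Y → ℝ)
    (θstar θtilde : EuclideanSpace ℝ (Fin dP)) (c : X → ℝ)
    (hrstar : ∀ x y, rstar x y =
      β * Real.log (loglinear ψ θstar x y / μ x y) + β * c x)
    (κ : ℝ) (hκ : 0 < κ) (s : Set (EuclideanSpace ℝ (Fin dP)))
    (hsc : StrongConvexOn s κ (logPartition ρ ψ))
    (hθstar : θstar ∈ s) (hθtilde : θtilde ∈ s) :
    β * κ / 2 * ‖θtilde - θstar‖ ^ 2 ≤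
      regValue ρ (loglinear ψ θstar) rstar β μ -
        regValue ρ (loglinear ψ θtilde) rstar β μ := by
  classical
  set v : EuclideanSpace ℝ (Fin dP) := θstar - θtilde with hv
  have hZ : ∀ (θ : EuclideanSpace ℝ (Fin dP)) (x : X),
      0 < ∑ y : Y, Real.exp ⟪θ, ψ x y⟫ := fun θ x =>
    Finset.sum_pos (fun y _ => Real.exp_pos _) Finset.univ_nonempty
  have hπpos : ∀ (θ : EuclideanSpace ℝ (Fin dP)) (x : X) (y : Y),
      0 < loglinear ψ θ x y := fun θ x y => div_pos (Real.exp_pos _) (hZ θ x)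
  have hπsum : ∀ (θ : EuclideanSpace ℝ (Fin dP)) (x : X),
      ∑ y : Y, loglinear ψ θ x y = 1 := fun θ x => by
    simp only [loglinear]
    rw [← Finset.sum_div, div_self (hZ θ x).ne']
  have hlog : ∀ (θ : EuclideanSpace ℝ (Fin dP)) (x : X) (y : Y),
      Real.log (loglinear ψ θ x y) =
        ⟪θ, ψ x y⟫ - Real.log (∑ y' : Y, Real.exp ⟪θ, ψ x y'⟫) := fun θ x y => by
    rw [loglinear, Real.log_div (Real.exp_pos _).ne' (hZ θ x).ne', Real.log_exp]
  -- Per-context value identity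
  have key : ∀ (θ : EuclideanSpace ℝ (Fin dP)) (x : X),
      (∑ y : Y, loglinear ψ θ x y * rstar x y)
        - β * ∑ y : Y, loglinear ψ θ x y * Real.log (loglinear ψ θ x y / μ x y)
      = β * ((∑ y : Y, loglinear ψ θ x y * ⟪θstar - θ, ψ x y⟫)
          + c x - Real.log (∑ y : Y, Real.exp ⟪θstar, ψ x y⟫)
          + Real.log (∑ y : Y, Real.exp ⟪θ, ψ x y⟫)) := by
    intro θ x
    have h1 : ∀ y : Y, loglinear ψ θ x y * rstar x y
        - β * (loglinear ψ θ x y * Real.log (loglinear ψ θ x y / μ x y))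
        = β * (loglinear ψ θ x y * ⟪θstar - θ, ψ x y⟫)
          + loglinear ψ θ x y
            * (β * (c x - Real.log (∑ y' : Y, Real.exp ⟪θstar, ψ x y'⟫)
                + Real.log (∑ y' : Y, Real.exp ⟪θ, ψ x y'⟫))) := by
      intro y
      rw [hrstar, Real.log_div (hπpos θstar x y).ne' (hμ x y).ne',
          Real.log_div (hπpos θ x y).ne' (hμ x y).ne', hlog, hlog, inner_sub_left]
      ring
    rw [Finset.mul_sum, ← Finset.sum_sub_distrib, Finset.sum_congr rfl (fun y _ => h1 y),
        Finset.sum_add_distrib, ← Finset.sum_mul, hπsum θ x, ← Finset.mul_sum]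
    ring
  -- regValue in closed form
  have hregθ : ∀ θ : EuclideanSpace ℝ (Fin dP),
      regValue ρ (loglinear ψ θ) rstar β μ
        = ∑ x : X, ρ x * (β * ((∑ y : Y, loglinear ψ θ x y * ⟪θstar - θ, ψ x y⟫)
            + c x - Real.log (∑ y : Y, Real.exp ⟪θstar, ψ x y⟫)
            + Real.log (∑ y : Y, Real.exp ⟪θ, ψ x y⟫))) := by
    intro θ
    rw [regValue, valueV, klDiv, Finset.mul_sum, ← Finset.sum_sub_distrib]
    refine Finset.sum_congr rfl fun x _ => ?_
    rw [show ρ x * (∑ y : Y, loglinear ψ θ x y * rstar x y)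
          - β * (ρ x * ∑ y : Y, loglinear ψ θ x y * Real.log (loglinear ψ θ x y / μ x y))
        = ρ x * ((∑ y : Y, loglinear ψ θ x y * rstar x y)
          - β * ∑ y : Y, loglinear ψ θ x y * Real.log (loglinear ψ θ x y / μ x y)) by ring,
        key θ x]
  -- The difference of regValues
  have hdiff : regValue ρ (loglinear ψ θstar) rstar β μ -
        regValue ρ (loglinear ψ θtilde) rstar β μ
      = β * ((logPartition ρ ψ θstar - logPartition ρ ψ θtilde)
          - ∑ x : X, ρ x * ∑ y : Y, loglinear ψ θtilde x y * ⟪v, ψ x y⟫) := by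
    rw [hregθ θstar, hregθ θtilde, ← Finset.sum_sub_distrib, logPartition, logPartition,
        ← Finset.sum_sub_distrib, ← Finset.sum_sub_distrib, Finset.mul_sum]
    refine Finset.sum_congr rfl fun x _ => ?_
    have h0 : (∑ y : Y, loglinear ψ θstar x y * ⟪θstar - θstar, ψ x y⟫) = 0 := by
      simp
    rw [h0, hv]
    ring
  -- Derivative of t ↦ A(θtilde + t • v) at 0
  set g : ℝ → ℝ := fun t => logPartition ρ ψ (θtilde + t • v) with hgdef
  set D : ℝ := ∑ x : X, ρ x *
      ((∑ y : Y, Real.exp ⟪θtilde, ψ x y⟫ * ⟪v, ψ x y⟫)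
        / (∑ y : Y, Real.exp ⟪θtilde, ψ x y⟫)) with hDdef
  have hgx : ∀ x : X, HasDerivAt
      (fun t : ℝ => Real.log (∑ y : Y, Real.exp (⟪θtilde, ψ x y⟫ + t * ⟪v, ψ x y⟫)))
      ((∑ y : Y, Real.exp ⟪θtilde, ψ x y⟫ * ⟪v, ψ x y⟫)
        / (∑ y : Y, Real.exp ⟪θtilde, ψ x y⟫)) 0 := by
    intro x
    have hsum : HasDerivAt
        (fun t : ℝ => ∑ y : Y, Real.exp (⟪θtilde, ψ x y⟫ + t * ⟪v, ψ x y⟫))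
        (∑ y : Y, Real.exp ⟪θtilde, ψ x y⟫ * ⟪v, ψ x y⟫) 0 := by
      refine HasDerivAt.fun_sum fun y _ => ?_
      have hlin : HasDerivAt (fun t : ℝ => ⟪θtilde, ψ x y⟫ + t * ⟪v, ψ x y⟫)
          ⟪v, ψ x y⟫ 0 := by
        simpa using ((hasDerivAt_id (0:ℝ)).mul_const ⟪v, ψ x y⟫).const_add ⟪θtilde, ψ x y⟫
      simpa using hlin.exp
    have hne : (∑ y : Y, Real.exp (⟪θtilde, ψ x y⟫ + (0:ℝ) * ⟪v, ψ x y⟫)) ≠ 0 := by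
      simpa using (hZ θtilde x).ne'
    simpa using hsum.log hne
  have hgderiv : HasDerivAt g D 0 := by
    have hg : g = fun t : ℝ => ∑ x : X, ρ x *
        Real.log (∑ y : Y, Real.exp (⟪θtilde, ψ x y⟫ + t * ⟪v, ψ x y⟫)) := by
      funext t
      simp only [hgdef, logPartition, inner_add_left, real_inner_smul_left]
    rw [hg, hDdef]
    exact HasDerivAt.fun_sum fun x _ => (hgx x).const_mul (ρ x)
  -- D equals the inner-product gradient term
  have hD : D = ∑ x : X, ρ x * ∑ y : Y, loglinear ψ θtilde x y * ⟪v, ψ x y⟫ := by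
    rw [hDdef]
    refine Finset.sum_congr rfl fun x _ => ?_
    congr 1
    rw [Finset.sum_div]
    refine Finset.sum_congr rfl fun y _ => ?_
    rw [loglinear]
    ring
  have hg0 : g 0 = logPartition ρ ψ θtilde := by simp [hgdef]
  have hg1 : g 1 = logPartition ρ ψ θstar := by simp [hgdef, hv]
  -- slope bound from strong convexity
  have hslope : ∀ t : ℝ, t ∈ Set.Ioo (0:ℝ) 1 →
      (g t - g 0) / t ≤ g 1 - g 0 - (1 - t) * (κ / 2 * ‖v‖ ^ 2) := by
    intro t ht
    have hcomb := hsc.2 hθtilde hθstar (show (0:ℝ) ≤ 1 - t by linarith [ht.2])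
      ht.1.le (show (1 - t) + t = 1 by ring)
    have hpt : (1 - t) • θtilde + t • θstar = θtilde + t • v := by
      rw [hv, smul_sub, sub_smul, one_smul]
      abel
    rw [hpt] at hcomb
    have hnv : ‖θtilde - θstar‖ = ‖v‖ := by rw [hv, norm_sub_rev]
    have hgt : g t ≤ (1 - t) * g 0 + t * g 1 - (1 - t) * t * (κ / 2 * ‖v‖ ^ 2) := by
      rw [hg0, hg1, ← hnv]
      simpa [smul_eq_mul] using hcomb
    rw [div_le_iff₀ ht.1]
    nlinarith [hgt]
  -- take the limit t → 0⁺
  have htend1 : Filter.Tendsto (fun t : ℝ => (g t - g 0) / t)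
      (nhdsWithin 0 (Set.Ioi 0)) (nhds D) := by
    have h := hasDerivAt_iff_tendsto_slope.mp hgderiv
    have hmono : nhdsWithin (0:ℝ) (Set.Ioi 0) ≤ nhdsWithin 0 {(0:ℝ)}ᶜ :=
      nhdsWithin_mono 0 (fun x hx => ne_of_gt hx)
    refine (h.mono_left hmono).congr fun t => ?_
    simp [slope_def_field, div_eq_inv_mul]
  have htend2 : Filter.Tendsto
      (fun t : ℝ => g 1 - g 0 - (1 - t) * (κ / 2 * ‖v‖ ^ 2))
      (nhdsWithin 0 (Set.Ioi 0)) (nhds (g 1 - g 0 - κ / 2 * ‖v‖ ^ 2)) := by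
    have hc : Continuous fun t : ℝ => g 1 - g 0 - (1 - t) * (κ / 2 * ‖v‖ ^ 2) :=
      continuous_const.sub ((continuous_const.sub continuous_id).mul continuous_const)
    have := (hc.tendsto 0).mono_left (nhdsWithin_le_nhds (s := Set.Ioi (0:ℝ)))
    simpa using this
  have hmem : Set.Ioo (0:ℝ) 1 ∈ nhdsWithin (0:ℝ) (Set.Ioi 0) :=
    Ioo_mem_nhdsGT_of_mem ⟨le_refl 0, one_pos⟩
  have hDle : D ≤ g 1 - g 0 - κ / 2 * ‖v‖ ^ 2 :=
    le_of_tendsto_of_tendsto htend1 htend2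
      (Filter.eventually_of_mem hmem fun t ht => hslope t ht)
  -- conclude
  rw [hdiff, ← hD]
  have hnv : ‖θtilde - θstar‖ = ‖v‖ := by rw [hv, norm_sub_rev]
  rw [hg0, hg1] at hDle
  have h2 : κ / 2 * ‖v‖ ^ 2 ≤
      (logPartition ρ ψ θstar - logPartition ρ ψ θtilde) - D := by linarith
  calc β * κ / 2 * ‖θtilde - θstar‖ ^ 2 = β * (κ / 2 * ‖v‖ ^ 2) := by
        rw [hnv]; ring
    _ ≤ β * ((logPartition ρ ψ θstar - logPartition ρ ψ θtilde) - D) :=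
        mul_le_mul_of_nonneg_left h2 hβ.le
end
end

section
/- Suppose ρ(x) > 0 for every x ∈ 𝒳 and the collection of difference vectors {ψ(x,y) − ψ(x,y') : x ∈ 𝒳, y, y' ∈ 𝒴} spans ℝ^{d_P}. Then for every B > 0 there exists κ > 0 such that the log-partition function A(θ) = Σ_x ρ(x) log Σ_{y∈𝒴} exp(θᵀψ(x,y)) is κ-strongly convex on the ball {θ ∈ ℝ^{d_P} : ‖θ‖₂ ≤ B}, i.e., zᵀ∇²A(θ)z ≥ κ‖z‖₂² for all z ∈ ℝ^{d_P} and all θ with ‖θ‖₂ ≤ B. -/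
open scoped BigOperators RealInnerProductSpace

noncomputable section

set_option linter.unusedSectionVars false

section AuxStatement6
open Real

variable {X Y : Type*} [Fintype X] [Fintype Y] [Nonempty Y] {dP : ℕ}

lemma sum_exp_pos' (c : Y → ℝ) : 0 < ∑ y : Y, exp (c y) :=
  Finset.sum_pos (fun _ _ => exp_pos _) Finset.univ_nonempty

lemma hasDerivAt_S (a b : Y → ℝ) (t : ℝ) :
    HasDerivAt (fun t => ∑ y : Y, exp (a y + t * b y))
      (∑ y : Y, b y * exp (a y + t * b y)) t := by
  refine HasDerivAt.fun_sum fun y _ => ?_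
  have h1 : HasDerivAt (fun t : ℝ => a y + t * b y) (b y) t := by
    simpa using ((hasDerivAt_id t).mul_const (b y)).const_add (a y)
  simpa [mul_comm] using h1.exp

lemma hasDerivAt_NS (a b : Y → ℝ) (t : ℝ) :
    HasDerivAt (fun t => (∑ y : Y, b y * exp (a y + t * b y)) / (∑ y : Y, exp (a y + t * b y)))
      ((∑ y : Y, b y ^ 2 * exp (a y + t * b y)) / (∑ y : Y, exp (a y + t * b y))
        - ((∑ y : Y, b y * exp (a y + t * b y)) / (∑ y : Y, exp (a y + t * b y))) ^ 2) t := by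
  have hN : HasDerivAt (fun t => ∑ y : Y, b y * exp (a y + t * b y))
      (∑ y : Y, b y ^ 2 * exp (a y + t * b y)) t := by
    refine HasDerivAt.fun_sum fun y _ => ?_
    have h1 : HasDerivAt (fun t : ℝ => a y + t * b y) (b y) t := by
      simpa using ((hasDerivAt_id t).mul_const (b y)).const_add (a y)
    have := (h1.exp).const_mul (b y)
    refine this.congr_deriv ?_
    ring
  have hS := hasDerivAt_S a b t
  have hSpos := sum_exp_pos' (fun y => a y + t * b y)
  have := hN.fun_div hS hSpos.ne'
  refine this.congr_deriv ?_
  field_simp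
  simp only [mul_comm (b _) t]
  ring

lemma var_identity (e b : Y → ℝ) :
    (∑ y : Y, b y ^ 2 * e y) * (∑ y : Y, e y) - (∑ y : Y, b y * e y) ^ 2
      = (1/2) * ∑ y : Y, ∑ y' : Y, e y * e y' * (b y - b y') ^ 2 := by
  have h1 : ∑ y : Y, ∑ y' : Y, e y * e y' * (b y - b y') ^ 2
      = ∑ y : Y, ∑ y' : Y, (b y ^ 2 * e y * e y' - 2 * ((b y * e y) * (b y' * e y'))
          + b y' ^ 2 * e y' * e y) := by
    refine Finset.sum_congr rfl fun y _ => Finset.sum_congr rfl fun y' _ => by ring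
  rw [h1]
  simp only [Finset.sum_add_distrib, Finset.sum_sub_distrib, ← Finset.sum_mul,
    ← Finset.mul_sum]
  ring

lemma var_lower (B : ℝ) (c b : Y → ℝ) (hc : ∀ y, |c y| ≤ B) :
    (1/2) * (exp (-(2*B)) / (Fintype.card Y : ℝ)) ^ 2
        * (∑ y : Y, ∑ y' : Y, (b y - b y') ^ 2)
      ≤ (∑ y : Y, b y ^ 2 * exp (c y)) / (∑ y : Y, exp (c y))
        - ((∑ y : Y, b y * exp (c y)) / (∑ y : Y, exp (c y))) ^ 2 := by
  set e : Y → ℝ := fun y => exp (c y) with he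
  have hS : 0 < ∑ y : Y, e y := Finset.sum_pos (fun y _ => exp_pos _) Finset.univ_nonempty
  set S : ℝ := ∑ y : Y, e y with hSdef
  set pm : ℝ := exp (-(2*B)) / (Fintype.card Y : ℝ) with hpm
  have hcard : 0 < (Fintype.card Y : ℝ) := by exact_mod_cast Fintype.card_pos
  have hpm0 : 0 < pm := by positivity
  have hRHS : (∑ y : Y, b y ^ 2 * e y) / S - ((∑ y : Y, b y * e y) / S) ^ 2
      = ((1/2) * ∑ y : Y, ∑ y' : Y, e y * e y' * (b y - b y') ^ 2) / S ^ 2 := by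
    rw [← var_identity]
    field_simp
    ring
  rw [hRHS, le_div_iff₀ (by positivity)]
  have hpmS : ∀ y, pm * S ≤ e y := by
    intro y
    have h1 : S ≤ (Fintype.card Y : ℝ) * exp B := by
      rw [hSdef]
      calc ∑ y : Y, e y ≤ ∑ _y : Y, exp B := by
            refine Finset.sum_le_sum fun y _ => ?_
            exact exp_le_exp.mpr (le_of_abs_le (hc y))
        _ = (Fintype.card Y : ℝ) * exp B := by
            simp [Finset.sum_const, nsmul_eq_mul]
    calc pm * S ≤ pm * ((Fintype.card Y : ℝ) * exp B) := by
          exact mul_le_mul_of_nonneg_left h1 hpm0.le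
      _ = exp (-(2*B)) * exp B := by rw [hpm]; field_simp
      _ = exp (-B) := by rw [← exp_add]; ring_nf
      _ ≤ e y := by
          rw [he]
          exact exp_le_exp.mpr (neg_le_of_abs_le (hc y))
  calc (1/2) * pm ^ 2 * (∑ y : Y, ∑ y' : Y, (b y - b y') ^ 2) * S ^ 2
      = (1/2) * ∑ y : Y, ∑ y' : Y, (pm * S) * (pm * S) * (b y - b y') ^ 2 := by
        simp only [Finset.mul_sum, Finset.sum_mul]
        exact Finset.sum_congr rfl fun y _ => Finset.sum_congr rfl fun y' _ => by ring
    _ ≤ (1/2) * ∑ y : Y, ∑ y' : Y, e y * e y' * (b y - b y') ^ 2 := by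
        have h0 : 0 ≤ pm * S := by positivity
        gcongr (1/2) * ?_
        refine Finset.sum_le_sum fun y _ => Finset.sum_le_sum fun y' _ => ?_
        exact mul_le_mul_of_nonneg_right
          (mul_le_mul (hpmS y) (hpmS y') h0 (le_of_lt (exp_pos _))) (sq_nonneg _)

lemma spectral_bound (ψ : X → Y → EuclideanSpace ℝ (Fin dP))
    (hspan : Submodule.span ℝ
      {v : EuclideanSpace ℝ (Fin dP) | ∃ x y y', v = ψ x y - ψ x y'} = ⊤) :
    ∃ c : ℝ, 0 < c ∧ ∀ z : EuclideanSpace ℝ (Fin dP),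
      c * ‖z‖ ^ 2 ≤ ∑ x : X, ∑ y : Y, ∑ y' : Y, ⟪z, ψ x y - ψ x y'⟫ ^ 2 := by
  set T : EuclideanSpace ℝ (Fin dP) →ₗ[ℝ] EuclideanSpace ℝ (X × Y × Y) :=
    { toFun := fun z => WithLp.toLp 2 fun p : X × Y × Y => ⟪z, ψ p.1 p.2.1 - ψ p.1 p.2.2⟫
      map_add' := by intro a b; ext p; simp [inner_add_left]
      map_smul' := by intro m a; ext p; simp [inner_smul_left] } with hT
  have hker : LinearMap.ker T = ⊥ := by
    rw [LinearMap.ker_eq_bot']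
    intro z hz
    have h0 : ∀ v ∈ {v : EuclideanSpace ℝ (Fin dP) | ∃ x y y', v = ψ x y - ψ x y'},
        ⟪z, v⟫ = 0 := by
      rintro v ⟨x, y, y', rfl⟩
      have := congrArg (fun v => v (x, y, y')) hz
      simpa [hT] using this
    have hall : ∀ v, ⟪z, v⟫ = 0 := by
      intro v
      have hv : v ∈ Submodule.span ℝ
          {v : EuclideanSpace ℝ (Fin dP) | ∃ x y y', v = ψ x y - ψ x y'} := by
        rw [hspan]; trivial
      induction hv using Submodule.span_induction with
      | mem w hw => exact h0 w hw
      | zero => simp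
      | add u w _ _ hu hw => rw [inner_add_right, hu, hw, add_zero]
      | smul a u _ hu => rw [inner_smul_right, hu, mul_zero]
    exact inner_self_eq_zero.mp (hall z)
  obtain ⟨K, hK0, hK⟩ := T.exists_antilipschitzWith hker
  refine ⟨(K : ℝ)⁻¹ ^ 2, by positivity, fun z => ?_⟩
  have h1 : ‖z‖ ≤ K * ‖T z‖ := by
    have := hK.le_mul_dist z 0
    simpa [map_zero, dist_eq_norm] using this
  have h2 : ‖T z‖ ^ 2 = ∑ x : X, ∑ y : Y, ∑ y' : Y, ⟪z, ψ x y - ψ x y'⟫ ^ 2 := by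
    rw [EuclideanSpace.norm_eq, Real.sq_sqrt (by positivity)]
    rw [Fintype.sum_prod_type]
    refine Finset.sum_congr rfl fun x _ => ?_
    rw [Fintype.sum_prod_type]
    refine Finset.sum_congr rfl fun y _ => Finset.sum_congr rfl fun y' _ => ?_
    simp [hT, sq_abs]
  rw [← h2]
  have hKpos : (0:ℝ) < K := hK0
  calc (K : ℝ)⁻¹ ^ 2 * ‖z‖ ^ 2 ≤ (K : ℝ)⁻¹ ^ 2 * (K * ‖T z‖) ^ 2 := by gcongr
      _ = ‖T z‖ ^ 2 := by field_simp

end AuxStatement6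

section Aux2
open Real

variable {X Y : Type*} [Fintype X] [Fintype Y] [Nonempty Y] {dP : ℕ}

lemma sum_exp_pos'' (c : Y → ℝ) : 0 < ∑ y : Y, exp (c y) :=
  Finset.sum_pos (fun _ _ => exp_pos _) Finset.univ_nonempty

lemma hasFDerivAt_inner_right (v θ : EuclideanSpace ℝ (Fin dP)) :
    HasFDerivAt (fun u : EuclideanSpace ℝ (Fin dP) => ⟪u, v⟫) (innerSL ℝ v) θ := by
  have h := (innerSL ℝ v).hasFDerivAt (x := θ)
  have : (fun u : EuclideanSpace ℝ (Fin dP) => ⟪u, v⟫) = fun u => (innerSL ℝ v) u := by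
    funext u; rw [innerSL_apply_apply]; exact real_inner_comm v u
  rw [this]
  exact h

/-- first derivative of the log-partition function, as a continuous linear map -/
def D1 (ψ : X → Y → EuclideanSpace ℝ (Fin dP)) (ρ : X → ℝ)
    (θ : EuclideanSpace ℝ (Fin dP)) : EuclideanSpace ℝ (Fin dP) →L[ℝ] ℝ :=
  ∑ x : X, ρ x • ((∑ y : Y, exp ⟪θ, ψ x y⟫)⁻¹ •
    ∑ y : Y, exp ⟪θ, ψ x y⟫ • (innerSL ℝ (ψ x y)))

lemma hasFDerivAt_logPartition (ψ : X → Y → EuclideanSpace ℝ (Fin dP)) (ρ : X → ℝ)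
    (θ : EuclideanSpace ℝ (Fin dP)) :
    HasFDerivAt (logPartition ρ ψ) (D1 ψ ρ θ) θ := by
  unfold logPartition D1
  refine HasFDerivAt.fun_sum fun x _ => ?_
  have hS : HasFDerivAt (fun u : EuclideanSpace ℝ (Fin dP) => ∑ y : Y, exp ⟪u, ψ x y⟫)
      (∑ y : Y, exp ⟪θ, ψ x y⟫ • (innerSL ℝ (ψ x y))) θ :=
    HasFDerivAt.fun_sum fun y _ => (hasFDerivAt_inner_right (ψ x y) θ).exp
  have hlog := hS.log (sum_exp_pos'' (fun y => ⟪θ, ψ x y⟫)).ne'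
  exact hlog.const_mul (ρ x)

lemma D1_apply (ψ : X → Y → EuclideanSpace ℝ (Fin dP)) (ρ : X → ℝ)
    (θ z : EuclideanSpace ℝ (Fin dP)) :
    D1 ψ ρ θ z = ∑ x : X, ρ x *
      ((∑ y : Y, ⟪z, ψ x y⟫ * exp ⟪θ, ψ x y⟫) / (∑ y : Y, exp ⟪θ, ψ x y⟫)) := by
  unfold D1
  rw [ContinuousLinearMap.sum_apply]
  refine Finset.sum_congr rfl fun x _ => ?_
  rw [ContinuousLinearMap.smul_apply, ContinuousLinearMap.smul_apply,
    ContinuousLinearMap.sum_apply]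
  simp only [ContinuousLinearMap.smul_apply, innerSL_apply_apply, smul_eq_mul]
  rw [div_eq_inv_mul]
  congr 2
  refine Finset.sum_congr rfl fun y _ => ?_
  rw [real_inner_comm (ψ x y) z]
  ring

lemma contDiff_logPartition (ψ : X → Y → EuclideanSpace ℝ (Fin dP)) (ρ : X → ℝ) :
    ContDiff ℝ 2 (logPartition ρ ψ) := by
  unfold logPartition
  refine ContDiff.sum fun x _ => ContDiff.mul contDiff_const ?_
  rw [contDiff_iff_contDiffAt]
  intro θ
  refine ContDiffAt.log ?_ (sum_exp_pos'' (fun y => ⟪θ, ψ x y⟫)).ne'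
  refine ContDiffAt.sum fun y _ => ?_
  refine ContDiffAt.exp ?_
  have h : ContDiff ℝ 2 (fun u : EuclideanSpace ℝ (Fin dP) => ⟪u, ψ x y⟫) := by
    have := (innerSL ℝ (ψ x y)).contDiff (n := 2)
    have heq : (fun u : EuclideanSpace ℝ (Fin dP) => ⟪u, ψ x y⟫)
        = fun u => (innerSL ℝ (ψ x y)) u := by
      funext u; rw [innerSL_apply_apply]; exact real_inner_comm (ψ x y) u
    rw [heq]; exact this
  exact h.contDiffAt

/-- the directional second derivative (variance) -/
def Vq (ψ : X → Y → EuclideanSpace ℝ (Fin dP)) (ρ : X → ℝ)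
    (w z : EuclideanSpace ℝ (Fin dP)) : ℝ :=
  ∑ x : X, ρ x *
    ((∑ y : Y, ⟪z, ψ x y⟫ ^ 2 * exp ⟪w, ψ x y⟫) / (∑ y : Y, exp ⟪w, ψ x y⟫)
      - ((∑ y : Y, ⟪z, ψ x y⟫ * exp ⟪w, ψ x y⟫) / (∑ y : Y, exp ⟪w, ψ x y⟫)) ^ 2)

lemma hasDerivAt_D1_line (ψ : X → Y → EuclideanSpace ℝ (Fin dP)) (ρ : X → ℝ)
    (θ z : EuclideanSpace ℝ (Fin dP)) (t : ℝ) :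
    HasDerivAt (fun s : ℝ => D1 ψ ρ (θ + s • z) z) (Vq ψ ρ (θ + t • z) z) t := by
  have key := HasDerivAt.fun_sum (u := (Finset.univ : Finset X)) fun x _ =>
    ((hasDerivAt_NS (fun y => ⟪θ, ψ x y⟫) (fun y => ⟪z, ψ x y⟫) t).const_mul (ρ x))
  refine HasDerivAt.congr_deriv (HasDerivAt.congr_of_eventuallyEq key (Filter.EventuallyEq.of_eq ?_)) ?_
  · funext s
    rw [D1_apply]
    simp only [inner_add_left, real_inner_smul_left]
  · unfold Vq
    simp only [inner_add_left, real_inner_smul_left, smul_eq_mul]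

end Aux2

open Real

/-- If `ρ(x) > 0` for all `x` and the difference vectors
`ψ(x,y) − ψ(x,y')` span `ℝ^{d_P}`, then for every `B > 0` there exists `κ > 0` such that the
log-partition function `A` is `κ`-strongly convex on the ball `{‖θ‖₂ ≤ B}`, i.e.
`zᵀ∇²A(θ)z ≥ κ‖z‖₂²` for every `z` and every `θ` with `‖θ‖₂ ≤ B`. -/
theorem statement6 {X Y : Type*} [Fintype X] [Fintype Y] [Nonempty Y] {dP : ℕ}
    (ψ : X → Y → EuclideanSpace ℝ (Fin dP)) (hψ : ∀ x y, ‖ψ x y‖ ≤ 1)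
    (ρ : X → ℝ) (hρ0 : ∀ x, 0 < ρ x) (hρ1 : ∑ x : X, ρ x = 1)
    (hspan : Submodule.span ℝ
      {v : EuclideanSpace ℝ (Fin dP) | ∃ x y y', v = ψ x y - ψ x y'} = ⊤) :
    ∀ B : ℝ, 0 < B → ∃ κ : ℝ, 0 < κ ∧
      StrongConvexOn (Metric.closedBall 0 B) κ (logPartition ρ ψ) ∧
      ∀ θ : EuclideanSpace ℝ (Fin dP), ‖θ‖ ≤ B →
        ∀ z : EuclideanSpace ℝ (Fin dP),
          κ * ‖z‖ ^ 2 ≤ iteratedFDeriv ℝ 2 (logPartition ρ ψ) θ ![z, z] := by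
  intro B hB
  -- X is nonempty
  have hXne : (Finset.univ : Finset X).Nonempty := by
    by_contra h
    rw [Finset.not_nonempty_iff_eq_empty] at h
    rw [h, Finset.sum_empty] at hρ1
    norm_num at hρ1
  obtain ⟨x₀, -, hx₀⟩ := Finset.exists_min_image Finset.univ ρ hXne
  obtain ⟨c, hc0, hcQ⟩ := spectral_bound ψ hspan
  set pm : ℝ := exp (-(2*B)) / (Fintype.card Y : ℝ) with hpm_def
  have hcard : 0 < (Fintype.card Y : ℝ) := by exact_mod_cast Fintype.card_pos
  have hpm0 : 0 < pm := by positivity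
  set κ : ℝ := ρ x₀ * ((1/2) * pm ^ 2 * c) with hκ_def
  have hκ0 : 0 < κ := by
    have := hρ0 x₀
    positivity
  -- the key lower bound on the directional variance
  have key : ∀ w : EuclideanSpace ℝ (Fin dP), ‖w‖ ≤ B →
      ∀ z : EuclideanSpace ℝ (Fin dP), κ * ‖z‖ ^ 2 ≤ Vq ψ ρ w z := by
    intro w hw z
    have hterm : ∀ x : X,
        (1/2) * pm ^ 2 * (∑ y : Y, ∑ y' : Y, ⟪z, ψ x y - ψ x y'⟫ ^ 2)
          ≤ (∑ y : Y, ⟪z, ψ x y⟫ ^ 2 * exp ⟪w, ψ x y⟫) / (∑ y : Y, exp ⟪w, ψ x y⟫)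
            - ((∑ y : Y, ⟪z, ψ x y⟫ * exp ⟪w, ψ x y⟫) / (∑ y : Y, exp ⟪w, ψ x y⟫)) ^ 2 := by
      intro x
      have hc' : ∀ y, |⟪w, ψ x y⟫| ≤ B := by
        intro y
        calc |⟪w, ψ x y⟫| ≤ ‖w‖ * ‖ψ x y‖ := abs_real_inner_le_norm w (ψ x y)
          _ ≤ B * 1 := mul_le_mul hw (hψ x y) (norm_nonneg _) hB.le
          _ = B := mul_one B
      have := var_lower B (fun y => ⟪w, ψ x y⟫) (fun y => ⟪z, ψ x y⟫) hc'
      simpa only [inner_sub_right] using this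
    have hterm_nonneg : ∀ x : X,
        (0:ℝ) ≤ (1/2) * pm ^ 2 * (∑ y : Y, ∑ y' : Y, ⟪z, ψ x y - ψ x y'⟫ ^ 2) := by
      intro x
      have : (0:ℝ) ≤ ∑ y : Y, ∑ y' : Y, ⟪z, ψ x y - ψ x y'⟫ ^ 2 :=
        Finset.sum_nonneg fun y _ => Finset.sum_nonneg fun y' _ => sq_nonneg _
      positivity
    calc κ * ‖z‖ ^ 2 = ρ x₀ * ((1/2) * pm ^ 2 * (c * ‖z‖ ^ 2)) := by rw [hκ_def]; ring
      _ ≤ ρ x₀ * ((1/2) * pm ^ 2 * (∑ x : X, ∑ y : Y, ∑ y' : Y, ⟪z, ψ x y - ψ x y'⟫ ^ 2)) := by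
          have h1 := hcQ z
          have h2 := (hρ0 x₀).le
          gcongr
      _ = ∑ x : X, ρ x₀ * ((1/2) * pm ^ 2 * (∑ y : Y, ∑ y' : Y, ⟪z, ψ x y - ψ x y'⟫ ^ 2)) := by
          rw [← Finset.mul_sum, ← Finset.mul_sum]
      _ ≤ Vq ψ ρ w z := by
          refine Finset.sum_le_sum fun x _ => ?_
          exact mul_le_mul (hx₀ x (Finset.mem_univ x)) (hterm x) (hterm_nonneg x)
            (hρ0 x).le
  refine ⟨κ, hκ0, ?_, ?_⟩
  · -- strong convexity
    rw [strongConvexOn_iff_convex]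
    refine ⟨convex_closedBall _ _, ?_⟩
    intro p hp q hq s t hs ht hst
    set z : EuclideanSpace ℝ (Fin dP) := q - p with hz
    have hn_eq : ∀ u : ℝ, κ/2 * ‖p + u • z‖^2
        = κ/2*‖p‖^2 + u*(κ*⟪p,z⟫) + u^2*(κ/2*‖z‖^2) := by
      intro u
      rw [norm_add_sq_real, real_inner_smul_right, norm_smul, Real.norm_eq_abs, mul_pow, sq_abs]
      ring
    set n : ℝ → ℝ := fun u => κ/2*‖p‖^2 + u*(κ*⟪p,z⟫) + u^2*(κ/2*‖z‖^2) with hn_def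
    set φ : ℝ → ℝ := fun u => logPartition ρ ψ (p + u • z) - n u with hφ_def
    have hline : ∀ u : ℝ, HasDerivAt (fun s : ℝ => p + s • z) z u := fun u => by
      simpa using ((hasDerivAt_id u).smul_const z).const_add p
    have hφ1 : ∀ u : ℝ, HasDerivAt φ
        (D1 ψ ρ (p + u • z) z - (κ*⟪p,z⟫ + u*(κ*‖z‖^2))) u := by
      intro u
      have h1 : HasDerivAt (fun s : ℝ => logPartition ρ ψ (p + s • z))
          (D1 ψ ρ (p + u • z) z) u :=
        (hasFDerivAt_logPartition ψ ρ (p + u • z)).comp_hasDerivAt (l := logPartition ρ ψ) u (hline u)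
      have h2 : HasDerivAt n (κ*⟪p,z⟫ + u*(κ*‖z‖^2)) u := by
        have ha : HasDerivAt (fun u : ℝ => u*(κ*⟪p,z⟫)) (κ*⟪p,z⟫) u := by
          simpa using (hasDerivAt_id u).mul_const (κ*⟪p,z⟫)
        have hb : HasDerivAt (fun u : ℝ => u^2*(κ/2*‖z‖^2)) (2*u^1*(κ/2*‖z‖^2)) u :=
          (hasDerivAt_pow 2 u).mul_const (κ/2*‖z‖^2)
        have hab := (ha.const_add (κ/2*‖p‖^2)).add hb
        rw [hn_def]
        refine hab.congr_deriv ?_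
        ring
      exact h1.sub h2
    have hφ2 : ∀ u : ℝ, HasDerivAt
        (fun u => D1 ψ ρ (p + u • z) z - (κ*⟪p,z⟫ + u*(κ*‖z‖^2)))
        (Vq ψ ρ (p + u • z) z - κ*‖z‖^2) u := by
      intro u
      have h1 := hasDerivAt_D1_line ψ ρ p z u
      have h2 : HasDerivAt (fun u : ℝ => κ*⟪p,z⟫ + u*(κ*‖z‖^2)) (κ*‖z‖^2) u := by
        simpa using ((hasDerivAt_id u).mul_const (κ*‖z‖^2)).const_add (κ*⟪p,z⟫)
      exact h1.sub h2
    have hmem : ∀ u ∈ Set.Icc (0:ℝ) 1, ‖p + u • z‖ ≤ B := by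
      intro u hu
      have hcomb : p + u • z = (1-u) • p + u • q := by
        rw [hz, smul_sub, sub_smul, one_smul]; abel
      rw [hcomb, ← mem_closedBall_zero_iff]
      exact convex_closedBall (0 : EuclideanSpace ℝ (Fin dP)) B hp hq
        (by linarith [hu.2] : (0:ℝ) ≤ 1 - u) hu.1 (by ring)
    have hconv : ConvexOn ℝ (Set.Icc (0:ℝ) 1) φ := by
      refine convexOn_of_hasDerivWithinAt2_nonneg (convex_Icc 0 1) ?_
        (fun u hu => (hφ1 u).hasDerivWithinAt) (fun u hu => (hφ2 u).hasDerivWithinAt) ?_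
      · exact (Differentiable.continuous fun u => (hφ1 u).differentiableAt).continuousOn
      · intro u hu
        have hb := key (p + u • z) (hmem u (interior_subset hu)) z
        linarith
    have hcc := hconv.2 (by norm_num : (0:ℝ) ∈ Set.Icc (0:ℝ) 1) (by norm_num : (1:ℝ) ∈ Set.Icc (0:ℝ) 1) hs ht hst
    have harg : s • (0:ℝ) + t • (1:ℝ) = t := by simp
    rw [harg] at hcc
    have hs' : s = 1 - t := by linarith
    have hcombt : p + t • z = s • p + t • q := by
      rw [hz, hs', smul_sub, sub_smul, one_smul]; abel
    have hφt : φ t = logPartition ρ ψ (s • p + t • q) - κ/2*‖s • p + t • q‖^2 := by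
      show logPartition ρ ψ (p + t • z) - n t = _
      rw [hn_def]
      simp only []
      rw [← hn_eq t, hcombt]
    have hp0 : p + (0:ℝ) • z = p := by simp
    have hq1 : p + (1:ℝ) • z = q := by rw [one_smul, hz]; abel
    have hφ0 : φ 0 = logPartition ρ ψ p - κ/2*‖p‖^2 := by
      show logPartition ρ ψ (p + (0:ℝ) • z) - n 0 = _
      rw [hn_def]
      simp only []
      rw [← hn_eq 0, hp0]
    have hφone : φ 1 = logPartition ρ ψ q - κ/2*‖q‖^2 := by
      show logPartition ρ ψ (p + (1:ℝ) • z) - n 1 = _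
      rw [hn_def]
      simp only []
      rw [← hn_eq 1, hq1]
    rw [hφt, hφ0, hφone] at hcc
    simp only [smul_eq_mul] at hcc ⊢
    linarith [hcc]
  · -- Hessian bound
    intro θ hθ z
    have hA2 : ContDiff ℝ 2 (logPartition ρ ψ) := contDiff_logPartition ψ ρ
    have hfd : fderiv ℝ (logPartition ρ ψ) = D1 ψ ρ :=
      funext fun u => (hasFDerivAt_logPartition ψ ρ u).fderiv
    have hdA : DifferentiableAt ℝ (fderiv ℝ (logPartition ρ ψ)) θ := by
      have h1 : ContDiff ℝ 1 (fderiv ℝ (logPartition ρ ψ)) :=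
        hA2.fderiv_right (by norm_num)
      exact (h1.differentiable one_ne_zero).differentiableAt
    have hline0 : HasDerivAt (fun s : ℝ => θ + s • z) z 0 := by
      simpa using ((hasDerivAt_id (0:ℝ)).smul_const z).const_add θ
    have hg : DifferentiableAt ℝ (fun u => fderiv ℝ (logPartition ρ ψ) u z) θ :=
      hdA.clm_apply (differentiableAt_const z)
    have h00 : θ + (0:ℝ) • z = θ := by simp
    have hg' : DifferentiableAt ℝ (fun u => fderiv ℝ (logPartition ρ ψ) u z)
        (θ + (0:ℝ) • z) := by rwa [h00]
    have hcomp : HasDerivAt (fun s : ℝ => fderiv ℝ (logPartition ρ ψ) (θ + s • z) z)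
        ((fderiv ℝ (fun u => fderiv ℝ (logPartition ρ ψ) u z) θ) z) 0 := by
      have hc0 := hg'.hasFDerivAt.comp_hasDerivAt 0 hline0
      rw [h00] at hc0
      exact hc0
    have hD1line : HasDerivAt (fun s : ℝ => fderiv ℝ (logPartition ρ ψ) (θ + s • z) z)
        (Vq ψ ρ θ z) 0 := by
      rw [hfd]
      have := hasDerivAt_D1_line ψ ρ θ z 0
      rwa [h00] at this
    have huniq : (fderiv ℝ (fun u => fderiv ℝ (logPartition ρ ψ) u z) θ) z = Vq ψ ρ θ z :=
      hcomp.unique hD1line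
    have h5 : fderiv ℝ (fun u => fderiv ℝ (logPartition ρ ψ) u z) θ
        = (fderiv ℝ (fderiv ℝ (logPartition ρ ψ)) θ).flip z := by
      rw [fderiv_clm_apply hdA (differentiableAt_const z)]
      simp
    have h6 : iteratedFDeriv ℝ 2 (logPartition ρ ψ) θ ![z, z] = Vq ψ ρ θ z := by
      rw [iteratedFDeriv_two_apply]
      rw [← huniq, h5]
      rfl
    rw [h6]
    exact key θ hθ z
end
end

section
/- In the natural-policy-gradient setup (with Ψ_n of full column rank nY), the iterates θ_{t+1} = θ_t + η' (Ψ_n Ψ_nᵀ)^† ∇𝒱_r(θ_t) satisfy, for every t ≥ 0, the recursion α_{t+1} = (I − (η'β/n) H(π_{θ_t})) α_t, where α_t = βΨ_nᵀθ_t − r − β log μ − (1/Y)((βΨ_nᵀθ_t − r − β log μ)ᵀ𝟙)𝟙. -/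
open scoped BigOperators RealInnerProductSpace

noncomputable section

/-- The sample KL-regularized objective
`𝒱_r(θ) = (1/n) Σ_i Σ_y π_θ(y|x_i)(r(x_i,y) − β log(π_θ(y|x_i)/μ(y|x_i)))`. -/
def sampleReg {X Y : Type*} [Fintype Y] {d n : ℕ}
    (ψ : X → Y → EuclideanSpace ℝ (Fin d)) (xd : Fin n → X)
    (r : X → Y → ℝ) (μ : X → Y → ℝ) (β : ℝ)
    (θ : EuclideanSpace ℝ (Fin d)) : ℝ :=
  (1 / (n : ℝ)) * ∑ i : Fin n, ∑ y : Y,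
    loglinear ψ θ (xd i) y *
      (r (xd i) y - β * Real.log (loglinear ψ θ (xd i) y / μ (xd i) y))

/-- The sample feature matrix `Ψ_n ∈ ℝ^{d_P × nY}` whose columns are `ψ(x_i, y)`. -/
def PsiMat {X Y : Type*} [Fintype Y] {d n : ℕ}
    (ψ : X → Y → EuclideanSpace ℝ (Fin d)) (xd : Fin n → X) :
    Matrix (Fin d) (Fin n × Y) ℝ :=
  Matrix.of fun j p => ψ (xd p.1) p.2 j

/-- `P` is the Moore–Penrose pseudoinverse of `A` (the four Penrose conditions). -/
def IsMoorePenrose {k : ℕ} (A P : Matrix (Fin k) (Fin k) ℝ) : Prop :=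
  A * P * A = A ∧ P * A * P = P ∧ (A * P).transpose = A * P ∧ (P * A).transpose = P * A

/-- One step of the natural-policy-gradient update
`θ ↦ θ + η' (Ψ_n Ψ_nᵀ)† ∇𝒱_r(θ)`, with `Pinv` standing for `(Ψ_n Ψ_nᵀ)†`. -/
def npgStep {X Y : Type*} [Fintype Y] {d n : ℕ}
    (ψ : X → Y → EuclideanSpace ℝ (Fin d)) (xd : Fin n → X)
    (r : X → Y → ℝ) (μ : X → Y → ℝ) (β η' : ℝ)
    (Pinv : Matrix (Fin d) (Fin d) ℝ)
    (θ : EuclideanSpace ℝ (Fin d)) : EuclideanSpace ℝ (Fin d) :=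
  θ + η' • (EuclideanSpace.equiv (Fin d) ℝ).symm
    (Pinv.mulVec (EuclideanSpace.equiv (Fin d) ℝ (gradient (sampleReg ψ xd r μ β) θ)))

/-- The vector `α = v − (1/Y)(vᵀ𝟙)𝟙 ∈ ℝ^{nY}` where
`v = βΨ_nᵀθ − r − β log μ` is the stacked vector over pairs `(i, y)`. -/
def alphaVec {X Y : Type*} [Fintype Y] {d n : ℕ}
    (ψ : X → Y → EuclideanSpace ℝ (Fin d)) (xd : Fin n → X)
    (r : X → Y → ℝ) (μ : X → Y → ℝ) (β : ℝ)
    (θ : EuclideanSpace ℝ (Fin d)) (p : Fin n × Y) : ℝ :=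
  (β * ⟪θ, ψ (xd p.1) p.2⟫ - r (xd p.1) p.2 - β * Real.log (μ (xd p.1) p.2)) -
    (∑ q : Fin n × Y,
      (β * ⟪θ, ψ (xd q.1) q.2⟫ - r (xd q.1) q.2 - β * Real.log (μ (xd q.1) q.2))) /
      (Fintype.card Y : ℝ)

/-- The block-diagonal matrix `H(π_θ) ∈ ℝ^{nY × nY}` whose `i`-th `Y×Y` block is
`diag(π_θ(·|x_i)) − π_θ(·|x_i) π_θ(·|x_i)ᵀ`. -/
def Hmat {X Y : Type*} [Fintype Y] [DecidableEq Y] {d n : ℕ}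
    (ψ : X → Y → EuclideanSpace ℝ (Fin d)) (xd : Fin n → X)
    (θ : EuclideanSpace ℝ (Fin d)) : Matrix (Fin n × Y) (Fin n × Y) ℝ :=
  Matrix.of fun p q =>
    if p.1 = q.1 then
      (if p.2 = q.2 then loglinear ψ θ (xd p.1) p.2 else 0) -
        loglinear ψ θ (xd p.1) p.2 * loglinear ψ θ (xd p.1) q.2
    else 0


section AuxMP
open Matrix

theorem mp_unique {k : ℕ} {A P Q : Matrix (Fin k) (Fin k) ℝ}
    (hP : IsMoorePenrose A P) (hQ : IsMoorePenrose A Q) : P = Q := by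
  obtain ⟨hP1, hP2, hP3, hP4⟩ := hP
  obtain ⟨hQ1, hQ2, hQ3, hQ4⟩ := hQ
  have h1 : Aᵀ = Aᵀ * Qᵀ * Aᵀ := by
    conv_lhs => rw [← hQ1]
    rw [Matrix.transpose_mul, Matrix.transpose_mul]
    simp only [Matrix.mul_assoc]
  have hAP : A * P = A * Q := by
    calc A * P = (A * P)ᵀ := hP3.symm
    _ = Pᵀ * Aᵀ := Matrix.transpose_mul _ _
    _ = Pᵀ * (Aᵀ * Qᵀ * Aᵀ) := by rw [← h1]
    _ = (Pᵀ * Aᵀ) * (Qᵀ * Aᵀ) := by simp only [Matrix.mul_assoc]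
    _ = (A * P)ᵀ * (A * Q)ᵀ := by rw [Matrix.transpose_mul, Matrix.transpose_mul]
    _ = (A * P) * (A * Q) := by rw [hP3, hQ3]
    _ = (A * P * A) * Q := by simp only [Matrix.mul_assoc]
    _ = A * Q := by rw [hP1]
  have hPA : P * A = Q * A := by
    calc P * A = (P * A)ᵀ := hP4.symm
    _ = Aᵀ * Pᵀ := Matrix.transpose_mul _ _
    _ = (Aᵀ * Qᵀ * Aᵀ) * Pᵀ := by rw [← h1]
    _ = (Aᵀ * Qᵀ) * (Aᵀ * Pᵀ) := by simp only [Matrix.mul_assoc]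
    _ = (Q * A)ᵀ * (P * A)ᵀ := by rw [Matrix.transpose_mul, Matrix.transpose_mul]
    _ = (Q * A) * (P * A) := by rw [hP4, hQ4]
    _ = Q * (A * P * A) := by simp only [Matrix.mul_assoc]
    _ = Q * A := by rw [hP1]
  calc P = P * A * P := hP2.symm
  _ = Q * A * P := by rw [hPA]
  _ = Q * (A * P) := by simp only [Matrix.mul_assoc]
  _ = Q * (A * Q) := by rw [hAP]
  _ = Q * A * Q := by simp only [Matrix.mul_assoc]
  _ = Q := hQ2

theorem proj_id {d : ℕ} {m : Type*} [Fintype m] [DecidableEq m]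
    {Ψ : Matrix (Fin d) m ℝ} (hrank : Ψ.rank = Fintype.card m)
    {P : Matrix (Fin d) (Fin d) ℝ} (hP : IsMoorePenrose (Ψ * Ψᵀ) P) :
    Ψᵀ * P * Ψ = 1 := by
  set G : Matrix m m ℝ := Ψᵀ * Ψ with hG
  have hGrank : G.rank = Fintype.card m := by
    rw [hG, Matrix.rank_transpose_mul_self, hrank]
  have hGunit : IsUnit G := by
    rw [← Matrix.mulVec_surjective_iff_isUnit]
    have hr : LinearMap.range G.mulVecLin = ⊤ := by
      apply Submodule.eq_top_of_finrank_eq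
      rw [← Matrix.rank] at *
      rw [hGrank]
      simp [Module.finrank_pi]
    exact LinearMap.range_eq_top.mp hr
  have hGdet : IsUnit G.det := (Matrix.isUnit_iff_isUnit_det G).mp hGunit
  clear_value G
  have h2 : Ψᵀ * Ψ = G := hG.symm
  have h3 : G * G⁻¹ = 1 := Matrix.mul_nonsing_inv G hGdet
  have h4 : G⁻¹ * G = 1 := Matrix.nonsing_inv_mul G hGdet
  have hGsymm : Gᵀ = G := by rw [hG, Matrix.transpose_mul, Matrix.transpose_transpose]
  have hGisymm : (G⁻¹)ᵀ = G⁻¹ := by rw [Matrix.transpose_nonsing_inv, hGsymm]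
  have hAQ : (Ψ * Ψᵀ) * (Ψ * (G⁻¹ * G⁻¹) * Ψᵀ) = Ψ * G⁻¹ * Ψᵀ := by
    calc (Ψ * Ψᵀ) * (Ψ * (G⁻¹ * G⁻¹) * Ψᵀ)
        = Ψ * ((Ψᵀ * Ψ) * (G⁻¹ * (G⁻¹ * Ψᵀ))) := by simp only [Matrix.mul_assoc]
    _ = Ψ * (G * (G⁻¹ * (G⁻¹ * Ψᵀ))) := by rw [h2]
    _ = Ψ * ((G * G⁻¹) * (G⁻¹ * Ψᵀ)) := by simp only [Matrix.mul_assoc]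
    _ = Ψ * (G⁻¹ * Ψᵀ) := by rw [h3, Matrix.one_mul]
    _ = Ψ * G⁻¹ * Ψᵀ := by simp only [Matrix.mul_assoc]
  have hQA : (Ψ * (G⁻¹ * G⁻¹) * Ψᵀ) * (Ψ * Ψᵀ) = Ψ * G⁻¹ * Ψᵀ := by
    calc (Ψ * (G⁻¹ * G⁻¹) * Ψᵀ) * (Ψ * Ψᵀ)
        = Ψ * (G⁻¹ * (G⁻¹ * ((Ψᵀ * Ψ) * Ψᵀ))) := by simp only [Matrix.mul_assoc]
    _ = Ψ * (G⁻¹ * ((G⁻¹ * G) * Ψᵀ)) := by rw [h2]; simp only [Matrix.mul_assoc]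
    _ = Ψ * (G⁻¹ * Ψᵀ) := by rw [h4, Matrix.one_mul]
    _ = Ψ * G⁻¹ * Ψᵀ := by simp only [Matrix.mul_assoc]
  have hsym : (Ψ * G⁻¹ * Ψᵀ)ᵀ = Ψ * G⁻¹ * Ψᵀ := by
    rw [Matrix.transpose_mul, Matrix.transpose_mul, Matrix.transpose_transpose, hGisymm]
    simp only [Matrix.mul_assoc]
  have hQmp : IsMoorePenrose (Ψ * Ψᵀ) (Ψ * (G⁻¹ * G⁻¹) * Ψᵀ) := by
    refine ⟨?_, ?_, ?_, ?_⟩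
    · calc (Ψ * Ψᵀ) * (Ψ * (G⁻¹ * G⁻¹) * Ψᵀ) * (Ψ * Ψᵀ)
          = (Ψ * G⁻¹ * Ψᵀ) * (Ψ * Ψᵀ) := by rw [hAQ]
      _ = Ψ * (G⁻¹ * ((Ψᵀ * Ψ) * Ψᵀ)) := by simp only [Matrix.mul_assoc]
      _ = Ψ * ((G⁻¹ * G) * Ψᵀ) := by rw [h2]; simp only [Matrix.mul_assoc]
      _ = Ψ * Ψᵀ := by rw [h4, Matrix.one_mul]
    · calc (Ψ * (G⁻¹ * G⁻¹) * Ψᵀ) * (Ψ * Ψᵀ) * (Ψ * (G⁻¹ * G⁻¹) * Ψᵀ)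
          = (Ψ * G⁻¹ * Ψᵀ) * (Ψ * (G⁻¹ * G⁻¹) * Ψᵀ) := by rw [hQA]
      _ = Ψ * (G⁻¹ * ((Ψᵀ * Ψ) * (G⁻¹ * (G⁻¹ * Ψᵀ)))) := by simp only [Matrix.mul_assoc]
      _ = Ψ * (G⁻¹ * ((G * G⁻¹) * (G⁻¹ * Ψᵀ))) := by rw [h2]; simp only [Matrix.mul_assoc]
      _ = Ψ * (G⁻¹ * (G⁻¹ * Ψᵀ)) := by rw [h3, Matrix.one_mul]
      _ = Ψ * (G⁻¹ * G⁻¹) * Ψᵀ := by simp only [Matrix.mul_assoc]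
    · rw [hAQ]; exact hsym
    · rw [hQA]; exact hsym
  have hPQ : P = Ψ * (G⁻¹ * G⁻¹) * Ψᵀ := mp_unique hP hQmp
  rw [hPQ]
  calc Ψᵀ * (Ψ * (G⁻¹ * G⁻¹) * Ψᵀ) * Ψ
      = (Ψᵀ * Ψ) * (G⁻¹ * (G⁻¹ * (Ψᵀ * Ψ))) := by simp only [Matrix.mul_assoc]
  _ = G * (G⁻¹ * (G⁻¹ * G)) := by rw [h2]
  _ = 1 := by rw [h4, Matrix.mul_one, h3]

end AuxMP

namespace S14
open Matrix
variable {X Y : Type*} [Fintype Y] [DecidableEq Y] {d n : ℕ}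

/-- u θ p = ⟪θ, ψ(x_{p.1}, p.2)⟫ -/
def u (ψ : X → Y → EuclideanSpace ℝ (Fin d)) (xd : Fin n → X)
    (θ : EuclideanSpace ℝ (Fin d)) (p : Fin n × Y) : ℝ := ⟪θ, ψ (xd p.1) p.2⟫

def Z (ψ : X → Y → EuclideanSpace ℝ (Fin d)) (xd : Fin n → X)
    (θ : EuclideanSpace ℝ (Fin d)) (i : Fin n) : ℝ := ∑ y : Y, Real.exp (u ψ xd θ (i, y))

def pol (ψ : X → Y → EuclideanSpace ℝ (Fin d)) (xd : Fin n → X)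
    (θ : EuclideanSpace ℝ (Fin d)) (p : Fin n × Y) : ℝ :=
  Real.exp (u ψ xd θ p) / Z ψ xd θ p.1

def gfun (ψ : X → Y → EuclideanSpace ℝ (Fin d)) (xd : Fin n → X)
    (r : X → Y → ℝ) (μ : X → Y → ℝ) (β : ℝ)
    (θ : EuclideanSpace ℝ (Fin d)) (p : Fin n × Y) : ℝ :=
  (r (xd p.1) p.2 + β * Real.log (μ (xd p.1) p.2)) - β * u ψ xd θ p + β * Real.log (Z ψ xd θ p.1)

def wfun (ψ : X → Y → EuclideanSpace ℝ (Fin d)) (xd : Fin n → X)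
    (r : X → Y → ℝ) (μ : X → Y → ℝ) (β : ℝ)
    (θ : EuclideanSpace ℝ (Fin d)) (p : Fin n × Y) : ℝ :=
  pol ψ xd θ p * (gfun ψ xd r μ β θ p - ∑ y : Y, pol ψ xd θ (p.1, y) * gfun ψ xd r μ β θ (p.1, y))

def gradv (ψ : X → Y → EuclideanSpace ℝ (Fin d)) (xd : Fin n → X)
    (r : X → Y → ℝ) (μ : X → Y → ℝ) (β : ℝ)
    (θ : EuclideanSpace ℝ (Fin d)) : EuclideanSpace ℝ (Fin d) :=
  (1 / (n : ℝ)) • ∑ p : Fin n × Y, wfun ψ xd r μ β θ p • ψ (xd p.1) p.2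


/-- v θ p = β u θ p − r − β log μ. -/
def vfun (ψ : X → Y → EuclideanSpace ℝ (Fin d)) (xd : Fin n → X)
    (r : X → Y → ℝ) (μ : X → Y → ℝ) (β : ℝ)
    (θ : EuclideanSpace ℝ (Fin d)) (p : Fin n × Y) : ℝ :=
  β * u ψ xd θ p - r (xd p.1) p.2 - β * Real.log (μ (xd p.1) p.2)

variable [Nonempty Y] (ψ : X → Y → EuclideanSpace ℝ (Fin d)) (xd : Fin n → X)
  (r : X → Y → ℝ) (μ : X → Y → ℝ) (β : ℝ) (θ : EuclideanSpace ℝ (Fin d))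

theorem Zpos (i : Fin n) : 0 < Z ψ xd θ i :=
  Finset.sum_pos (fun y _ => Real.exp_pos _) Finset.univ_nonempty

theorem pol_pos (p : Fin n × Y) : 0 < pol ψ xd θ p :=
  div_pos (Real.exp_pos _) (Zpos ψ xd θ p.1)

theorem sum_pol (i : Fin n) : ∑ y : Y, pol ψ xd θ (i, y) = 1 := by
  simp only [pol]
  rw [← Finset.sum_div]
  exact div_self (Zpos ψ xd θ i).ne'

theorem loglinear_eq_pol (p : Fin n × Y) : loglinear ψ θ (xd p.1) p.2 = pol ψ xd θ p := rfl

theorem sampleReg_eq (hμ : ∀ x y, 0 < μ x y) :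
    sampleReg ψ xd r μ β = fun θ =>
      (1 / (n : ℝ)) * ∑ p : Fin n × Y, pol ψ xd θ p * gfun ψ xd r μ β θ p := by
  funext θ
  rw [sampleReg, Fintype.sum_prod_type]
  congr 1
  refine Finset.sum_congr rfl fun i _ => Finset.sum_congr rfl fun y _ => ?_
  rw [loglinear_eq_pol ψ xd θ (i, y)]
  congr 1
  rw [gfun, pol, Real.log_div (div_pos (Real.exp_pos _) (Zpos ψ xd θ i)).ne' (hμ _ _).ne',
    Real.log_div (Real.exp_pos _).ne' (Zpos ψ xd θ i).ne', Real.log_exp]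
  ring


theorem block_identity {Y : Type*} [Fintype Y] (π g a : Y → ℝ) (β : ℝ)
    (h1 : ∑ y : Y, π y = 1) :
    ∑ y : Y, (π y * (g y - ∑ y' : Y, π y' * g y')) * a y
      = ∑ y : Y, (π y * (-(β * a y) + β * ∑ y' : Y, π y' * a y')
          + g y * (π y * (a y - ∑ y' : Y, π y' * a y'))) := by
  set T : ℝ := ∑ y' : Y, π y' * a y' with hT
  set G : ℝ := ∑ y' : Y, π y' * g y' with hG
  have e1 : ∑ y : Y, (π y * (g y - G)) * a y
      = (∑ y : Y, π y * g y * a y) - G * T := by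
    rw [Finset.mul_sum, ← Finset.sum_sub_distrib]
    refine Finset.sum_congr rfl fun y _ => by ring
  have e2 : ∑ y : Y, (π y * (-(β * a y) + β * T) + g y * (π y * (a y - T)))
      = (∑ y : Y, π y * g y * a y) - β * T + (β * T) * (∑ y : Y, π y)
          - T * ∑ y : Y, π y * g y := by
    rw [hT]
    rw [Finset.mul_sum, Finset.mul_sum, Finset.mul_sum]
    rw [← hT]
    simp only [← Finset.sum_sub_distrib, ← Finset.sum_add_distrib]
    refine Finset.sum_congr rfl fun y _ => by ring
  rw [e1, e2, h1, ← hG]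
  ring

theorem hasGradientAt_sampleReg (hμ : ∀ x y, 0 < μ x y) :
    HasGradientAt (sampleReg ψ xd r μ β) (gradv ψ xd r μ β θ) θ := by
  rw [hasGradientAt_iff_hasFDerivAt, sampleReg_eq ψ xd r μ β hμ]
  have hu : ∀ p : Fin n × Y, HasFDerivAt (fun θ : EuclideanSpace ℝ (Fin d) => u ψ xd θ p)
      (innerSL ℝ (ψ (xd p.1) p.2)) θ := by
    intro p
    have h : (fun θ : EuclideanSpace ℝ (Fin d) => u ψ xd θ p)
        = fun θ => (innerSL ℝ (ψ (xd p.1) p.2)) θ := by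
      funext θ; exact real_inner_comm _ _
    rw [h]; exact (innerSL ℝ _).hasFDerivAt
  have hZ : ∀ i, HasFDerivAt (fun θ => Z ψ xd θ i)
      (∑ y : Y, Real.exp (u ψ xd θ (i, y)) • innerSL ℝ (ψ (xd i) y)) θ := by
    intro i
    exact HasFDerivAt.fun_sum fun y _ => (hu (i, y)).exp
  have hlogZ : ∀ i, HasFDerivAt (fun θ => Real.log (Z ψ xd θ i))
      (∑ y : Y, pol ψ xd θ (i, y) • innerSL ℝ (ψ (xd i) y)) θ := by
    intro i
    have h := (hZ i).log (Zpos ψ xd θ i).ne'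
    refine h.congr_fderiv ?_
    symm
    rw [Finset.smul_sum]
    refine Finset.sum_congr rfl fun y _ => ?_
    rw [smul_smul, pol, div_eq_inv_mul]
  have hpolf : ∀ p θ', pol ψ xd θ' p
      = Real.exp (u ψ xd θ' p - Real.log (Z ψ xd θ' p.1)) := by
    intro p θ'
    rw [Real.exp_sub, Real.exp_log (Zpos ψ xd θ' p.1), pol]
  have hpol : ∀ p, HasFDerivAt (fun θ => pol ψ xd θ p)
      (pol ψ xd θ p • (innerSL ℝ (ψ (xd p.1) p.2)
        - ∑ y : Y, pol ψ xd θ (p.1, y) • innerSL ℝ (ψ (xd p.1) y))) θ := by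
    intro p
    have h : (fun θ => pol ψ xd θ p)
        = fun θ => Real.exp (u ψ xd θ p - Real.log (Z ψ xd θ p.1)) :=
      funext fun θ' => hpolf p θ'
    rw [h, hpolf p θ]
    exact ((hu p).sub (hlogZ p.1)).exp
  have hg : ∀ p, HasFDerivAt (fun θ => gfun ψ xd r μ β θ p)
      ((-(β • innerSL ℝ (ψ (xd p.1) p.2))) + β •
          ∑ y : Y, pol ψ xd θ (p.1, y) • innerSL ℝ (ψ (xd p.1) y)) θ :=
    fun p => (((hu p).const_mul β).const_sub _).add ((hlogZ p.1).const_mul β)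
  have hterm : ∀ p : Fin n × Y, HasFDerivAt (fun θ => pol ψ xd θ p * gfun ψ xd r μ β θ p)
      (pol ψ xd θ p • ((-(β • innerSL ℝ (ψ (xd p.1) p.2))) + β •
          ∑ y : Y, pol ψ xd θ (p.1, y) • innerSL ℝ (ψ (xd p.1) y))
        + gfun ψ xd r μ β θ p • (pol ψ xd θ p • (innerSL ℝ (ψ (xd p.1) p.2)
            - ∑ y : Y, pol ψ xd θ (p.1, y) • innerSL ℝ (ψ (xd p.1) y)))) θ :=
    fun p => (hpol p).mul (hg p)
  have hsum : HasFDerivAt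
      (fun θ => ∑ p : Fin n × Y, pol ψ xd θ p * gfun ψ xd r μ β θ p)
      (∑ p : Fin n × Y, (pol ψ xd θ p • ((-(β • innerSL ℝ (ψ (xd p.1) p.2))) + β •
          ∑ y : Y, pol ψ xd θ (p.1, y) • innerSL ℝ (ψ (xd p.1) y))
        + gfun ψ xd r μ β θ p • (pol ψ xd θ p • (innerSL ℝ (ψ (xd p.1) p.2)
            - ∑ y : Y, pol ψ xd θ (p.1, y) • innerSL ℝ (ψ (xd p.1) y))))) θ :=
    HasFDerivAt.fun_sum (fun p _ => hterm p)
  have hfinal := hsum.const_mul (1 / (n : ℝ))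
  have heq : (InnerProductSpace.toDual ℝ (EuclideanSpace ℝ (Fin d))) (gradv ψ xd r μ β θ)
      = (1 / (n : ℝ)) • ∑ p : Fin n × Y, (pol ψ xd θ p •
          ((-(β • innerSL ℝ (ψ (xd p.1) p.2))) + β •
          ∑ y : Y, pol ψ xd θ (p.1, y) • innerSL ℝ (ψ (xd p.1) y))
        + gfun ψ xd r μ β θ p • (pol ψ xd θ p • (innerSL ℝ (ψ (xd p.1) p.2)
            - ∑ y : Y, pol ψ xd θ (p.1, y) • innerSL ℝ (ψ (xd p.1) y)))) := by
    apply ContinuousLinearMap.ext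
    intro h
    simp only [InnerProductSpace.toDual_apply_apply, ContinuousLinearMap.smul_apply,
      ContinuousLinearMap.add_apply, ContinuousLinearMap.sub_apply,
      ContinuousLinearMap.neg_apply, ContinuousLinearMap.sum_apply, innerSL_apply_apply,
      smul_eq_mul, gradv, sum_inner, real_inner_smul_left]
    congr 1
    rw [Fintype.sum_prod_type, Fintype.sum_prod_type]
    refine Finset.sum_congr rfl fun i _ => ?_
    have hb := block_identity (fun y => pol ψ xd θ (i, y)) (fun y => gfun ψ xd r μ β θ (i, y))
      (fun y => ⟪ψ (xd i) y, h⟫) β (sum_pol ψ xd θ i)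
    simpa only [wfun] using hb
  rw [heq]
  exact hfinal

theorem vfun_eq_gfun (p : Fin n × Y) :
    S14.vfun ψ xd r μ β θ p = β * Real.log (Z ψ xd θ p.1) - gfun ψ xd r μ β θ p := by
  rw [vfun, gfun]; ring

theorem wfun_eq (p : Fin n × Y) :
    wfun ψ xd r μ β θ p
      = pol ψ xd θ p * (∑ y : Y, pol ψ xd θ (p.1, y) * vfun ψ xd r μ β θ (p.1, y))
        - pol ψ xd θ p * vfun ψ xd r μ β θ p := by
  have hg : ∀ q : Fin n × Y, gfun ψ xd r μ β θ q
      = β * Real.log (Z ψ xd θ q.1) - vfun ψ xd r μ β θ q := by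
    intro q; rw [vfun, gfun]; ring
  have hsum : ∑ y : Y, pol ψ xd θ (p.1, y) * gfun ψ xd r μ β θ (p.1, y)
      = β * Real.log (Z ψ xd θ p.1)
        - ∑ y : Y, pol ψ xd θ (p.1, y) * vfun ψ xd r μ β θ (p.1, y) := by
    have : ∀ y : Y, pol ψ xd θ (p.1, y) * gfun ψ xd r μ β θ (p.1, y)
        = β * Real.log (Z ψ xd θ p.1) * pol ψ xd θ (p.1, y)
          - pol ψ xd θ (p.1, y) * vfun ψ xd r μ β θ (p.1, y) := by
      intro y; rw [hg (p.1, y)]; ring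
    rw [Finset.sum_congr rfl fun y _ => this y, Finset.sum_sub_distrib, ← Finset.mul_sum,
      sum_pol, mul_one]
  rw [wfun, hg p, hsum]
  ring

theorem sum_wfun : ∑ q : Fin n × Y, wfun ψ xd r μ β θ q = 0 := by
  rw [Fintype.sum_prod_type]
  refine Finset.sum_eq_zero fun i _ => ?_
  have : ∀ y : Y, wfun ψ xd r μ β θ (i, y)
      = pol ψ xd θ (i, y) * (∑ y' : Y, pol ψ xd θ (i, y') * vfun ψ xd r μ β θ (i, y'))
        - pol ψ xd θ (i, y) * vfun ψ xd r μ β θ (i, y) := fun y => wfun_eq ψ xd r μ β θ (i, y)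
  rw [Finset.sum_congr rfl fun y _ => this y, Finset.sum_sub_distrib, ← Finset.sum_mul,
    sum_pol, one_mul, sub_self]

theorem Hmat_mulVec (b : Fin n × Y → ℝ) (p : Fin n × Y) :
    (Hmat ψ xd θ).mulVec b p
      = pol ψ xd θ p * b p - pol ψ xd θ p * ∑ y : Y, pol ψ xd θ (p.1, y) * b (p.1, y) := by
  rw [Matrix.mulVec]
  rw [show ((fun j => Hmat ψ xd θ p j) ⬝ᵥ b) = ∑ q : Fin n × Y, Hmat ψ xd θ p q * b q from rfl]
  rw [Fintype.sum_prod_type]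
  have hrow : ∀ i' : Fin n, ∑ y' : Y, Hmat ψ xd θ p (i', y') * b (i', y')
      = if p.1 = i' then
          pol ψ xd θ p * b p - pol ψ xd θ p * ∑ y : Y, pol ψ xd θ (p.1, y) * b (p.1, y)
        else 0 := by
    intro i'
    by_cases hi : p.1 = i'
    · subst hi
      rw [if_pos rfl]
      have : ∀ y' : Y, Hmat ψ xd θ p (p.1, y') * b (p.1, y')
          = (if p.2 = y' then pol ψ xd θ p * b (p.1, y') else 0)
            - pol ψ xd θ p * (pol ψ xd θ (p.1, y') * b (p.1, y')) := by
        intro y'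
        rw [Hmat]
        simp only [Matrix.of_apply, if_pos rfl]
        rw [loglinear_eq_pol ψ xd θ p, loglinear_eq_pol ψ xd θ (p.1, y')]
        by_cases hy : p.2 = y' <;> simp [hy] <;> ring
      rw [Finset.sum_congr rfl fun y' _ => this y', Finset.sum_sub_distrib,
        Finset.sum_ite_eq Finset.univ p.2 (fun y' => pol ψ xd θ p * b (p.1, y')),
        if_pos (Finset.mem_univ _), ← Finset.mul_sum]
    · rw [if_neg hi]
      refine Finset.sum_eq_zero fun y' _ => ?_
      rw [Hmat]
      simp only [Matrix.of_apply, if_neg hi, zero_mul]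
  rw [Finset.sum_congr rfl fun i' _ => hrow i',
    Finset.sum_ite_eq Finset.univ p.1
      (fun _ => pol ψ xd θ p * b p - pol ψ xd θ p * ∑ y : Y, pol ψ xd θ (p.1, y) * b (p.1, y)),
    if_pos (Finset.mem_univ _)]

theorem alphaVec_eq (p : Fin n × Y) :
    alphaVec ψ xd r μ β θ p
      = vfun ψ xd r μ β θ p - (∑ q : Fin n × Y, vfun ψ xd r μ β θ q) / (Fintype.card Y : ℝ) :=
  rfl

theorem Hmat_mulVec_alpha (p : Fin n × Y) :
    (Hmat ψ xd θ).mulVec (alphaVec ψ xd r μ β θ) p = -(wfun ψ xd r μ β θ p) := by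
  rw [Hmat_mulVec ψ xd θ (alphaVec ψ xd r μ β θ) p]
  have hs : ∑ y : Y, pol ψ xd θ (p.1, y) * alphaVec ψ xd r μ β θ (p.1, y)
      = (∑ y : Y, pol ψ xd θ (p.1, y) * vfun ψ xd r μ β θ (p.1, y))
        - (∑ q : Fin n × Y, vfun ψ xd r μ β θ q) / (Fintype.card Y : ℝ) := by
    have : ∀ y : Y, pol ψ xd θ (p.1, y) * alphaVec ψ xd r μ β θ (p.1, y)
        = pol ψ xd θ (p.1, y) * vfun ψ xd r μ β θ (p.1, y)
          - ((∑ q : Fin n × Y, vfun ψ xd r μ β θ q) / (Fintype.card Y : ℝ))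
            * pol ψ xd θ (p.1, y) := by
      intro y; rw [alphaVec_eq ψ xd r μ β θ (p.1, y)]; ring
    rw [Finset.sum_congr rfl fun y _ => this y, Finset.sum_sub_distrib, ← Finset.mul_sum,
      sum_pol, mul_one]
  rw [hs, alphaVec_eq ψ xd r μ β θ p, wfun_eq ψ xd r μ β θ p]
  ring

theorem inner_npg (θ0 : EuclideanSpace ℝ (Fin d)) (hμ : ∀ x y, 0 < μ x y)
    (hrank : (PsiMat ψ xd).rank = Fintype.card (Fin n × Y))
    (Pinv : Matrix (Fin d) (Fin d) ℝ)
    (hPinv : IsMoorePenrose (PsiMat ψ xd * (PsiMat ψ xd).transpose) Pinv)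
    (η' : ℝ) :
    ∀ p : Fin n × Y, ⟪npgStep ψ xd r μ β η' Pinv θ0, ψ (xd p.1) p.2⟫
      = u ψ xd θ0 p + (η' / (n : ℝ)) * wfun ψ xd r μ β θ0 p := by
  intro p
  have hproj : (PsiMat ψ xd)ᵀ * Pinv * (PsiMat ψ xd) = 1 := proj_id hrank hPinv
  rw [npgStep, (hasGradientAt_sampleReg ψ xd r μ β θ0 hμ).gradient]
  rw [inner_add_left, real_inner_smul_left]
  have hIP : ∀ (vv : Fin d → ℝ) (ww : EuclideanSpace ℝ (Fin d)),
      ⟪(EuclideanSpace.equiv (Fin d) ℝ).symm vv, ww⟫ = ∑ j, vv j * ww j := by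
    intro vv ww
    simp [PiLp.inner_apply, RCLike.inner_apply]
    exact Finset.sum_congr rfl fun _ _ => mul_comm _ _
  have hE : (EuclideanSpace.equiv (Fin d) ℝ) (gradv ψ xd r μ β θ0)
      = (1 / (n : ℝ)) • (PsiMat ψ xd).mulVec (wfun ψ xd r μ β θ0) := by
    have h1 : (EuclideanSpace.equiv (Fin d) ℝ) (gradv ψ xd r μ β θ0)
        = (1 / (n : ℝ)) • ∑ q : Fin n × Y, wfun ψ xd r μ β θ0 q •
            ((EuclideanSpace.equiv (Fin d) ℝ) (ψ (xd q.1) q.2)) := by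
      rw [gradv, _root_.map_smul, map_sum]
      simp_rw [_root_.map_smul]
    rw [h1]
    congr 1
    funext j
    rw [Finset.sum_apply, Matrix.mulVec]
    rw [show ((fun q => PsiMat ψ xd j q) ⬝ᵥ wfun ψ xd r μ β θ0)
      = ∑ q : Fin n × Y, PsiMat ψ xd j q * wfun ψ xd r μ β θ0 q from rfl]
    refine Finset.sum_congr rfl fun q _ => ?_
    simp only [Pi.smul_apply, smul_eq_mul]
    rw [PsiMat, Matrix.of_apply, mul_comm]
    rfl
  rw [hIP, hE]
  have hterm : ∑ j, (Pinv.mulVec ((1 / (n : ℝ)) •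
        (PsiMat ψ xd).mulVec (wfun ψ xd r μ β θ0))) j * ψ (xd p.1) p.2 j
      = (1 / (n : ℝ)) * wfun ψ xd r μ β θ0 p := by
    rw [Matrix.mulVec_smul]
    have hT : ∑ j, ((1 / (n : ℝ)) • Pinv.mulVec ((PsiMat ψ xd).mulVec
          (wfun ψ xd r μ β θ0))) j * ψ (xd p.1) p.2 j
        = (1 / (n : ℝ)) * ((PsiMat ψ xd)ᵀ.mulVec (Pinv.mulVec ((PsiMat ψ xd).mulVec
            (wfun ψ xd r μ β θ0)))) p := by
      rw [Matrix.mulVec]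
      rw [show (((PsiMat ψ xd)ᵀ p) ⬝ᵥ (Pinv.mulVec ((PsiMat ψ xd).mulVec
          (wfun ψ xd r μ β θ0))))
        = ∑ j, (PsiMat ψ xd)ᵀ p j * (Pinv.mulVec ((PsiMat ψ xd).mulVec
            (wfun ψ xd r μ β θ0))) j from rfl]
      rw [Finset.mul_sum]
      refine Finset.sum_congr rfl fun j _ => ?_
      simp only [Pi.smul_apply, smul_eq_mul, Matrix.transpose_apply]
      rw [PsiMat, Matrix.of_apply]
      ring
    rw [hT, Matrix.mulVec_mulVec, Matrix.mulVec_mulVec, hproj, Matrix.one_mulVec]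
  rw [hterm]
  rw [show (⟪θ0, ψ (xd p.1) p.2⟫ : ℝ) = u ψ xd θ0 p from rfl]
  ring

end S14

/-- For the natural-policy-gradient iterates
`θ_{t+1} = θ_t + η'(Ψ_nΨ_nᵀ)†∇𝒱_r(θ_t)` (with `Ψ_n` of full column rank `nY`), the
vectors `α_t = βΨ_nᵀθ_t − r − β log μ − (1/Y)((βΨ_nᵀθ_t − r − β log μ)ᵀ𝟙)𝟙` satisfy
`α_{t+1} = (I − (η'β/n) H(π_{θ_t})) α_t`. -/
theorem statement14 {X Y : Type*} [Fintype Y] [DecidableEq Y] [Nonempty Y]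
    {dP n : ℕ} (hn : 0 < n)
    (ψ : X → Y → EuclideanSpace ℝ (Fin dP)) (hψ : ∀ x y, ‖ψ x y‖ ≤ 1)
    (xd : Fin n → X)
    (r : X → Y → ℝ) (hr : ∀ x y, r x y ∈ Set.Icc (0 : ℝ) 1)
    (μ : X → Y → ℝ) (hμ : ∀ x y, 0 < μ x y)
    (β η' : ℝ) (hβ : 0 < β) (hη : 0 < η')
    (hrank : (PsiMat ψ xd).rank = Fintype.card (Fin n × Y))
    (Pinv : Matrix (Fin dP) (Fin dP) ℝ)
    (hPinv : IsMoorePenrose (PsiMat ψ xd * (PsiMat ψ xd).transpose) Pinv)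
    (θ : ℕ → EuclideanSpace ℝ (Fin dP))
    (hθ : ∀ t : ℕ, θ (t + 1) = npgStep ψ xd r μ β η' Pinv (θ t)) :
    ∀ t : ℕ,
      alphaVec ψ xd r μ β (θ (t + 1)) =
        ((1 : Matrix (Fin n × Y) (Fin n × Y) ℝ) -
            (η' * β / (n : ℝ)) • Hmat ψ xd (θ t)).mulVec
          (alphaVec ψ xd r μ β (θ t)) := by
  intro t
  funext p
  set θt := θ t with hθt
  have hstep : ∀ q : Fin n × Y, ⟪θ (t + 1), ψ (xd q.1) q.2⟫
      = S14.u ψ xd θt q + (η' / (n : ℝ)) * S14.wfun ψ xd r μ β θt q := by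
    rw [hθ t]
    exact S14.inner_npg ψ xd r μ β θt hμ hrank Pinv hPinv η'
  have hLHS : alphaVec ψ xd r μ β (θ (t + 1)) p
      = (S14.vfun ψ xd r μ β θt p + (η' * β / (n : ℝ)) * S14.wfun ψ xd r μ β θt p)
        - (∑ q : Fin n × Y, S14.vfun ψ xd r μ β θt q) / (Fintype.card Y : ℝ) := by
    rw [alphaVec]
    simp_rw [hstep]
    have hsum2 : ∑ q : Fin n × Y,
        (β * (S14.u ψ xd θt q + (η' / (n : ℝ)) * S14.wfun ψ xd r μ β θt q)
          - r (xd q.1) q.2 - β * Real.log (μ (xd q.1) q.2))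
        = ∑ q : Fin n × Y, (S14.vfun ψ xd r μ β θt q
            + (β * (η' / (n : ℝ))) * S14.wfun ψ xd r μ β θt q) := by
      refine Finset.sum_congr rfl fun q _ => ?_
      rw [S14.vfun]; ring
    rw [hsum2, Finset.sum_add_distrib, ← Finset.mul_sum, S14.sum_wfun ψ xd r μ β θt,
      mul_zero, add_zero]
    rw [S14.vfun]
    ring
  have hRHS : ((1 : Matrix (Fin n × Y) (Fin n × Y) ℝ) -
        (η' * β / (n : ℝ)) • Hmat ψ xd θt).mulVec (alphaVec ψ xd r μ β θt) p
      = alphaVec ψ xd r μ β θt p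
        + (η' * β / (n : ℝ)) * S14.wfun ψ xd r μ β θt p := by
    rw [Matrix.sub_mulVec, Matrix.smul_mulVec]
    simp only [Matrix.one_mulVec, Pi.sub_apply, Pi.smul_apply, smul_eq_mul]
    rw [S14.Hmat_mulVec_alpha ψ xd r μ β θt p]
    ring
  rw [hLHS, hRHS, S14.alphaVec_eq ψ xd r μ β θt p]
  ring
end
end

section
/- Let π assign to each i ∈ [n] a probability vector π(·|x_i) on 𝒴, and let H(π) ∈ ℝ^{nY×nY} be the block-diagonal matrix whose i-th Y×Y block is diag(π(·|x_i)) − π(·|x_i)π(·|x_i)ᵀ. Then for every vector v ∈ ℝ^{nY} whose coordinates sum to zero within each block (i.e., Σ_{y∈𝒴} v_{i,y} = 0 for every i ∈ [n]): ‖(I − H(π)) v‖₂ ≤ (1 − min_{i∈[n], y∈𝒴} π(y|x_i)) ‖v‖₂. -/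
open scoped BigOperators

noncomputable section

/-- The block-diagonal matrix `H(π) ∈ ℝ^{nY × nY}` whose `i`-th `Y×Y` block is
`diag(π(·|x_i)) − π(·|x_i) π(·|x_i)ᵀ`. -/
def HmatP {Y : Type*} [Fintype Y] [DecidableEq Y] {n : ℕ} (π : Fin n → Y → ℝ) :
    Matrix (Fin n × Y) (Fin n × Y) ℝ :=
  Matrix.of fun p q =>
    if p.1 = q.1 then
      (if p.2 = q.2 then π p.1 p.2 else 0) - π p.1 p.2 * π p.1 q.2
    else 0

/-- The Euclidean norm `‖v‖₂` of a vector indexed by a finite type. -/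
def l2norm {ι : Type*} [Fintype ι] (v : ι → ℝ) : ℝ :=
  Real.sqrt (∑ i : ι, v i ^ 2)

section aux

variable {Y : Type*} [Fintype Y] [DecidableEq Y] {n : ℕ}

/-- mulVec formula for `I - HmatP π`. -/
lemma S_mulVec (π : Fin n → Y → ℝ) (w : Fin n × Y → ℝ) (i : Fin n) (y : Y) :
    (((1 : Matrix (Fin n × Y) (Fin n × Y) ℝ) - HmatP π).mulVec w) (i, y) =
    (1 - π i y) * w (i, y) + π i y * ∑ z : Y, π i z * w (i, z) := by
  classical
  have key : ∀ z : Y, ((1 : Matrix (Fin n × Y) (Fin n × Y) ℝ) - HmatP π) (i, y) (i, z) * w (i, z)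
      = (if z = y then (1 - π i y) * w (i, z) else 0) + π i y * (π i z * w (i, z)) := by
    intro z
    simp only [Matrix.sub_apply, Matrix.one_apply, HmatP, Matrix.of_apply, Prod.mk.injEq,
      true_and, if_pos rfl]
    by_cases h : y = z
    · subst h; simp; ring
    · simp [h, Ne.symm h]; ring
  have h0 : ∀ j ∈ (Finset.univ : Finset (Fin n)), j ≠ i →
      (∑ z : Y, ((1 : Matrix (Fin n × Y) (Fin n × Y) ℝ) - HmatP π) (i, y) (j, z) * w (j, z)) = 0 := by
    intro j _ hj
    refine Finset.sum_eq_zero fun z _ => ?_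
    have h1 : i ≠ j := fun h => hj h.symm
    simp [Matrix.sub_apply, Matrix.one_apply, HmatP, Prod.ext_iff, h1]
  rw [Matrix.mulVec, dotProduct, Fintype.sum_prod_type,
    Finset.sum_eq_single i h0 (by simp)]
  rw [Finset.sum_congr rfl fun z _ => key z, Finset.sum_add_distrib,
    Finset.sum_ite_eq' Finset.univ y (fun z => (1 - π i y) * w (i, z)), ← Finset.mul_sum]
  simp

end aux

/-- If `π` assigns to each `i ∈ [n]` a probability vector on `𝒴` and
`v ∈ ℝ^{nY}` has zero coordinate sum within each block, then
`‖(I − H(π)) v‖₂ ≤ (1 − min_{i,y} π(y|x_i)) ‖v‖₂`. -/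
theorem statement15 {Y : Type*} [Fintype Y] [DecidableEq Y] [Nonempty Y]
    {n : ℕ} (hn : 0 < n)
    (π : Fin n → Y → ℝ)
    (hπ0 : ∀ i y, 0 ≤ π i y) (hπ1 : ∀ i, ∑ y : Y, π i y = 1)
    (v : Fin n × Y → ℝ)
    (hv : ∀ i : Fin n, ∑ y : Y, v (i, y) = 0) :
    l2norm (((1 : Matrix (Fin n × Y) (Fin n × Y) ℝ) - HmatP π).mulVec v) ≤
      (1 - ⨅ p : Fin n × Y, π p.1 p.2) * l2norm v := by
  classical
  haveI : Nonempty (Fin n) := ⟨⟨0, hn⟩⟩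
  set S := (1 : Matrix (Fin n × Y) (Fin n × Y) ℝ) - HmatP π with hS
  set m := ⨅ p : Fin n × Y, π p.1 p.2 with hm
  have hm_le : ∀ i y, m ≤ π i y := fun i y =>
    ciInf_le (Finite.bddBelow_range _) ((i, y) : Fin n × Y)
  have hm0 : 0 ≤ m := le_ciInf fun p => hπ0 p.1 p.2
  have hπle1 : ∀ i y, π i y ≤ 1 := by
    intro i y
    calc π i y ≤ ∑ z : Y, π i z :=
          Finset.single_le_sum (fun z _ => hπ0 i z) (Finset.mem_univ y)
      _ = 1 := hπ1 i
  have hm1 : m ≤ 1 :=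
    le_trans (hm_le (Classical.arbitrary _) (Classical.arbitrary _)) (hπle1 _ _)
  have hc0 : (0:ℝ) ≤ 1 - m := by linarith
  have hSmv : ∀ (w : Fin n × Y → ℝ) (i : Fin n) (y : Y),
      S.mulVec w (i, y) = (1 - π i y) * w (i, y) + π i y * ∑ z : Y, π i z * w (i, z) := by
    intro w i y; rw [hS]; exact S_mulVec π w i y
  -- bilinear form
  set B : (Fin n × Y → ℝ) → (Fin n × Y → ℝ) → ℝ :=
    fun a b => ∑ p : Fin n × Y, a p * S.mulVec b p with hBdef
  have hB : ∀ a b, B a b =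
      ∑ i : Fin n, ((∑ y : Y, (1 - π i y) * (a (i,y) * b (i,y))) +
        (∑ y : Y, π i y * a (i,y)) * (∑ y : Y, π i y * b (i,y))) := by
    intro a b
    show (∑ p : Fin n × Y, a p * S.mulVec b p) = _
    rw [Fintype.sum_prod_type]
    refine Finset.sum_congr rfl fun i _ => ?_
    have e : ∀ y : Y, a (i,y) * S.mulVec b (i,y)
        = (1 - π i y) * (a (i,y) * b (i,y)) +
          (π i y * a (i,y)) * (∑ z : Y, π i z * b (i, z)) := by
      intro y; rw [hSmv]; ring
    rw [Finset.sum_congr rfl fun y _ => e y, Finset.sum_add_distrib, ← Finset.sum_mul]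
  -- square-root representation of B
  set F : (Fin n × Y → ℝ) → ((Fin n × Y) ⊕ Fin n) → ℝ :=
    fun a => Sum.elim (fun p => Real.sqrt (1 - π p.1 p.2) * a p)
      (fun i => ∑ y : Y, π i y * a (i, y)) with hFdef
  have hBF : ∀ a b, B a b = ∑ j : (Fin n × Y) ⊕ Fin n, F a j * F b j := by
    intro a b
    rw [hB, Fintype.sum_sum_type, Fintype.sum_prod_type, ← Finset.sum_add_distrib]
    refine Finset.sum_congr rfl fun i _ => ?_
    simp only [hFdef, Sum.elim_inl, Sum.elim_inr]
    congr 1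
    refine Finset.sum_congr rfl fun y _ => ?_
    have h1 : (0:ℝ) ≤ 1 - π i y := by linarith [hπle1 i y]
    rw [show Real.sqrt (1 - π i y) * a (i,y) * (Real.sqrt (1 - π i y) * b (i,y))
        = (Real.sqrt (1 - π i y) * Real.sqrt (1 - π i y)) * (a (i,y) * b (i,y)) by ring,
      Real.mul_self_sqrt h1]
  have hBnn : ∀ a, 0 ≤ B a a := by
    intro a
    rw [hBF]
    exact Finset.sum_nonneg fun j _ => mul_self_nonneg _
  have hCS : ∀ a b, (B a b) ^ 2 ≤ B a a * B b b := by
    intro a b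
    rw [hBF a b, hBF a a, hBF b b]
    have h := Finset.sum_mul_sq_le_sq_mul_sq Finset.univ (F a) (F b)
    simpa [sq] using h
  -- quadratic upper bound on the zero-block-sum subspace
  have hquad : ∀ (w : Fin n × Y → ℝ), (∀ i, ∑ y : Y, w (i,y) = 0) →
      B w w ≤ (1 - m) * ∑ p : Fin n × Y, w p ^ 2 := by
    intro w hw0
    rw [hB, Fintype.sum_prod_type, Finset.mul_sum]
    refine Finset.sum_le_sum fun i _ => ?_
    have e0 : ∀ y : Y, π i y * w (i,y) = (π i y - m) * w (i,y) + m * w (i,y) :=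
      fun y => by ring
    have ht : (∑ y : Y, π i y * w (i,y)) = ∑ y : Y, (π i y - m) * w (i,y) := by
      rw [Finset.sum_congr rfl fun y _ => e0 y, Finset.sum_add_distrib,
        ← Finset.mul_sum, hw0, mul_zero, add_zero]
    have hsq : ∀ y : Y, Real.sqrt (π i y - m) * Real.sqrt (π i y - m) = π i y - m :=
      fun y => Real.mul_self_sqrt (by linarith [hm_le i y])
    have hkey : (∑ y : Y, π i y * w (i,y)) ^ 2 ≤ ∑ y : Y, (π i y - m) * w (i,y) ^ 2 := by
      rw [ht]
      have hcs := Finset.sum_mul_sq_le_sq_mul_sq Finset.univ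
        (fun y : Y => Real.sqrt (π i y - m)) (fun y : Y => Real.sqrt (π i y - m) * w (i,y))
      have e1 : (∑ y : Y, Real.sqrt (π i y - m) * (Real.sqrt (π i y - m) * w (i,y)))
          = ∑ y : Y, (π i y - m) * w (i,y) := by
        refine Finset.sum_congr rfl fun y _ => ?_
        rw [← mul_assoc, hsq]
      have e2 : (∑ y : Y, (Real.sqrt (π i y - m)) ^ 2) = 1 - (Fintype.card Y : ℝ) * m := by
        rw [Finset.sum_congr rfl fun y _ => by rw [sq, hsq y]]
        rw [Finset.sum_sub_distrib, hπ1, Finset.sum_const, Finset.card_univ, nsmul_eq_mul]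
      have e3 : (∑ y : Y, (Real.sqrt (π i y - m) * w (i,y)) ^ 2)
          = ∑ y : Y, (π i y - m) * w (i,y) ^ 2 := by
        refine Finset.sum_congr rfl fun y _ => ?_
        rw [mul_pow, sq (Real.sqrt _), hsq]
      rw [e1, e2, e3] at hcs
      have hA : 0 ≤ ∑ y : Y, (π i y - m) * w (i,y) ^ 2 :=
        Finset.sum_nonneg fun y _ =>
          mul_nonneg (by linarith [hm_le i y]) (sq_nonneg _)
      have hfac : (1 - (Fintype.card Y : ℝ) * m) ≤ 1 := by
        have : (0:ℝ) ≤ (Fintype.card Y : ℝ) * m :=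
          mul_nonneg (Nat.cast_nonneg _) hm0
        linarith
      calc (∑ y : Y, (π i y - m) * w (i,y)) ^ 2
          ≤ (1 - (Fintype.card Y : ℝ) * m) * ∑ y : Y, (π i y - m) * w (i,y) ^ 2 := hcs
        _ ≤ 1 * ∑ y : Y, (π i y - m) * w (i,y) ^ 2 := mul_le_mul_of_nonneg_right hfac hA
        _ = ∑ y : Y, (π i y - m) * w (i,y) ^ 2 := one_mul _
    have hsum : (∑ y : Y, (1 - π i y) * (w (i,y) * w (i,y)))
        + ∑ y : Y, (π i y - m) * w (i,y) ^ 2 = (1 - m) * ∑ y : Y, w (i,y) ^ 2 := by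
      rw [Finset.mul_sum, ← Finset.sum_add_distrib]
      refine Finset.sum_congr rfl fun y _ => ?_
      ring
    calc (∑ y : Y, (1 - π i y) * (w (i,y) * w (i,y)))
          + (∑ y : Y, π i y * w (i,y)) * (∑ y : Y, π i y * w (i,y))
        ≤ (∑ y : Y, (1 - π i y) * (w (i,y) * w (i,y)))
          + ∑ y : Y, (π i y - m) * w (i,y) ^ 2 := by nlinarith [hkey]
      _ = (1 - m) * ∑ y : Y, w (i,y) ^ 2 := hsum
  -- the image vector
  set u := S.mulVec v with hu
  have hu0 : ∀ i : Fin n, ∑ y : Y, u (i,y) = 0 := by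
    intro i
    rw [Finset.sum_congr rfl fun y _ => hSmv v i y, Finset.sum_add_distrib]
    have e0 : ∀ y : Y, (1 - π i y) * v (i,y) = v (i,y) - π i y * v (i,y) :=
      fun y => by ring
    have e1 : (∑ y : Y, (1 - π i y) * v (i,y)) = - ∑ y : Y, π i y * v (i,y) := by
      rw [Finset.sum_congr rfl fun y _ => e0 y, Finset.sum_sub_distrib, hv]
      ring
    have e2 : (∑ y : Y, π i y * ∑ z : Y, π i z * v (i,z))
        = ∑ y : Y, π i y * v (i,y) := by
      rw [← Finset.sum_mul, hπ1, one_mul]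
    rw [e1, e2]; ring
  have hBuv : B u v = ∑ p : Fin n × Y, u p ^ 2 := by
    show (∑ p : Fin n × Y, u p * S.mulVec v p) = _
    exact Finset.sum_congr rfl fun p _ => by rw [← hu, sq]
  have hBuu := hquad u hu0
  have hBvv := hquad v hv
  have hsu : (0:ℝ) ≤ ∑ p : Fin n × Y, u p ^ 2 :=
    Finset.sum_nonneg fun p _ => sq_nonneg _
  have hsv : (0:ℝ) ≤ ∑ p : Fin n × Y, v p ^ 2 :=
    Finset.sum_nonneg fun p _ => sq_nonneg _
  have hmain : ∑ p : Fin n × Y, u p ^ 2 ≤ (1 - m)^2 * ∑ p : Fin n × Y, v p ^ 2 := by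
    have h1 : (∑ p : Fin n × Y, u p ^ 2) ^ 2 ≤ B u u * B v v := by
      rw [← hBuv]; exact hCS u v
    have h2 : B u u * B v v ≤ ((1 - m) * ∑ p : Fin n × Y, u p ^ 2) *
        ((1 - m) * ∑ p : Fin n × Y, v p ^ 2) :=
      mul_le_mul hBuu hBvv (hBnn v) (mul_nonneg hc0 hsu)
    rcases eq_or_lt_of_le hsu with h | h
    · rw [← h]; positivity
    · nlinarith [h1, h2]
  -- conclude
  rw [l2norm, l2norm]
  have hrw : (1 - m) * Real.sqrt (∑ p : Fin n × Y, v p ^ 2)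
      = Real.sqrt ((1 - m)^2 * ∑ p : Fin n × Y, v p ^ 2) := by
    rw [Real.sqrt_mul (sq_nonneg _), Real.sqrt_sq hc0]
  rw [hrw]
  exact Real.sqrt_le_sqrt hmain
end
end
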